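/- arXiv:1406.2964 — 13 statements merged into one kernel-verified Lean document; each statement's English description precedes it below -/
import Mathlib

section
/- Let p be a prime and let V and W be vector spaces over 𝔽_p. Let V_A and V_C be subspaces of V with V_A ⊔ V_C = V (the subspaces together span V), and let V_B = V_A ⊓ V_C. Suppose β_A : V_A × V_A → W and β_C : V_C × V_C → W are alternating bilinear maps that agree on V_B × V_B. Then there exists an alternating bilinear map β_D : V × V → W whose restriction to V_A × V_A is β_A and whose restriction to V_C × V_C is β_C. (This is the amalgamation property for the category 𝔹(n) of alternating bilinear maps into a fixed target.) -/
/-!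
Extend `β_A` to `V` as `α = β_A ∘ (s × s)` for a retraction `s : V → V_A`. The defect
`γ = β_C - α|_{V_C}` is alternating and vanishes on `V_B`, so it remains to extend `γ` by an
alternating form that vanishes on `V_A`. Since `V_A ⊔ V_C = V`, the subspace `V_C` has a complement
inside `V_A`; projecting onto `V_C` along it gives a retraction `r : V → V_C` with `r(V_A) ⊆ V_B`,
and `γ ∘ (r × r)` is the required form.
-/

theorem exists_isCompl_le_of_sup_eq_top {α : Type*} [Lattice α] [BoundedOrder α]
    [IsModularLattice α] [ComplementedLattice α] {a c : α} (h : a ⊔ c = ⊤) :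
    ∃ k ≤ a, IsCompl k c := by
  obtain ⟨k, hdisj, hsup⟩ := IsModularLattice.exists_disjoint_and_sup_eq (inf_le_left : a ⊓ c ≤ a)
  have hka : k ≤ a := hsup ▸ le_sup_right
  refine ⟨k, hka, disjoint_iff_inf_le.mpr ?_, codisjoint_iff_le_sup.mpr ?_⟩
  · exact (le_inf inf_le_left (inf_le_inf_right c hka)).trans hdisj.symm.le_bot
  · calc ⊤ = a ⊓ c ⊔ k ⊔ c := by rw [hsup, h]
      _ ≤ k ⊔ c := sup_le (sup_le (le_sup_of_le_right inf_le_right) le_sup_left) le_sup_right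

namespace Submodule

variable {K V : Type*} [DivisionRing K] [AddCommGroup V] [Module K V]

theorem exists_retraction_mapsTo_of_sup_eq_top {A C : Submodule K V} (h : A ⊔ C = ⊤) :
    ∃ r : V →ₗ[K] C, (∀ x : C, r x = x) ∧ ∀ x ∈ A, (r x : V) ∈ A := by
  obtain ⟨k, hkA, hkC⟩ := exists_isCompl_le_of_sup_eq_top h
  refine ⟨C.projectionOnto k hkC.symm, projectionOnto_apply_left hkC.symm, fun x hx => ?_⟩
  have hsub : x - C.projection k hkC.symm x ∈ A := hkA (sub_projection_mem hkC.symm x)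
  simpa using A.sub_mem hx hsub

end Submodule

namespace LinearMap

theorem IsAlt.compl₁₂ {R U V W : Type*} [CommSemiring R] [AddCommMonoid U] [Module R U]
    [AddCommMonoid V] [Module R V] [AddCommMonoid W] [Module R W] {β : U →ₗ[R] U →ₗ[R] W}
    (hβ : β.IsAlt) (f : V →ₗ[R] U) : (β.compl₁₂ f f).IsAlt :=
  fun x => hβ (f x)

variable {K V W : Type*} [Field K] [AddCommGroup V] [Module K V] [AddCommGroup W] [Module K W]

theorem exists_isAlt_extension {A : Submodule K V} {β : A →ₗ[K] A →ₗ[K] W} (hβ : β.IsAlt) :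
    ∃ α : V →ₗ[K] V →ₗ[K] W, α.IsAlt ∧ α.domRestrict₁₂ A A = β := by
  obtain ⟨s, hs⟩ := A.subtype.exists_leftInverse_of_injective A.ker_subtype
  have hsA (x : A) : s x = x := LinearMap.congr_fun hs x
  refine ⟨β.compl₁₂ s s, hβ.compl₁₂ s, ?_⟩
  ext x y
  simp [domRestrict₁₂_apply, hsA]

theorem exists_isAlt_extension_of_eq_zero_on_inf {A C : Submodule K V} (h : A ⊔ C = ⊤)
    {γ : C →ₗ[K] C →ₗ[K] W} (hγ : γ.IsAlt)
    (hγA : ∀ x y : C, (x : V) ∈ A → (y : V) ∈ A → γ x y = 0) :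
    ∃ δ : V →ₗ[K] V →ₗ[K] W, δ.IsAlt ∧ δ.domRestrict₁₂ A A = 0 ∧ δ.domRestrict₁₂ C C = γ := by
  obtain ⟨r, hrC, hrA⟩ := Submodule.exists_retraction_mapsTo_of_sup_eq_top h
  refine ⟨γ.compl₁₂ r r, hγ.compl₁₂ r, ?_, ?_⟩
  · ext x y
    exact hγA (r x) (r y) (hrA x x.2) (hrA y y.2)
  · ext x y
    simp [domRestrict₁₂_apply, hrC]

end LinearMap

/-- Amalgamation property for alternating bilinear maps into a fixed target:
two alternating bilinear maps on subspaces `V_A`, `V_C` spanning `V`, which agree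
on `V_B = V_A ⊓ V_C`, have a common alternating bilinear extension to all of `V`. -/
theorem bilinear_amalgamation (p : ℕ) (hp : p.Prime)
    (V W : Type) [AddCommGroup V] [Module (ZMod p) V]
    [AddCommGroup W] [Module (ZMod p) W]
    (V_A V_C : Submodule (ZMod p) V) (hsup : V_A ⊔ V_C = ⊤)
    (β_A : V_A →ₗ[ZMod p] V_A →ₗ[ZMod p] W)
    (β_C : V_C →ₗ[ZMod p] V_C →ₗ[ZMod p] W)
    (hAalt : ∀ x : V_A, β_A x x = 0)
    (hCalt : ∀ x : V_C, β_C x x = 0)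
    (hagree : ∀ (x y : V) (hxA : x ∈ V_A) (hxC : x ∈ V_C) (hyA : y ∈ V_A) (hyC : y ∈ V_C),
      β_A ⟨x, hxA⟩ ⟨y, hyA⟩ = β_C ⟨x, hxC⟩ ⟨y, hyC⟩) :
    ∃ β_D : V →ₗ[ZMod p] V →ₗ[ZMod p] W,
      (∀ x : V, β_D x x = 0) ∧
      (∀ (x y : V) (hx : x ∈ V_A) (hy : y ∈ V_A), β_D x y = β_A ⟨x, hx⟩ ⟨y, hy⟩) ∧
      (∀ (x y : V) (hx : x ∈ V_C) (hy : y ∈ V_C), β_D x y = β_C ⟨x, hx⟩ ⟨y, hy⟩) := by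
  have : Fact p.Prime := ⟨hp⟩
  obtain ⟨α, hα, hαA⟩ := LinearMap.exists_isAlt_extension (β := β_A) hAalt
  have hγ : (β_C - α.domRestrict₁₂ V_C V_C).IsAlt := fun x => by
    simp [LinearMap.domRestrict₁₂_apply, hCalt x, hα.self_eq_zero]
  obtain ⟨δ, hδ, hδA, hδC⟩ := LinearMap.exists_isAlt_extension_of_eq_zero_on_inf hsup hγ
    fun x y hx hy => by
      simp [LinearMap.domRestrict₁₂_apply, ← hαA, ← hagree x y hx x.2 hy y.2]
  refine ⟨α + δ, fun x => by simp [hα.self_eq_zero, hδ.self_eq_zero], fun x y hx hy => ?_,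
    fun x y hx hy => ?_⟩
  · simpa [LinearMap.domRestrict₁₂_apply, ← hαA] using LinearMap.congr_fun₂ hδA ⟨x, hx⟩ ⟨y, hy⟩
  · simpa [LinearMap.domRestrict₁₂_apply, eq_sub_iff_add_eq'] using
      LinearMap.congr_fun₂ hδC ⟨x, hx⟩ ⟨y, hy⟩
end

section
/- Let p be a prime and let V and W be vector spaces over 𝔽_p. Let V_A, V_C be subspaces of V with V_A ⊔ V_C = V and V_B = V_A ⊓ V_C. Suppose β_A and β_C are alternating bilinear maps on V_A and V_C respectively, agreeing on V_B. Let X be a linearly independent family in V_A with V_A = V_B ⊕ span(X), let Y be a linearly independent family in V_C with V_C = V_B ⊕ span(Y), and let φ : X × Y → W be an arbitrary function. Then there exists an alternating bilinear map β_D : V × V → W restricting to β_A on V_A and to β_C on V_C and satisfying β_D(x,y) = φ(x,y) for every x ∈ X and y ∈ Y. -/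
/-!
Since `V_A ⊓ V_C = V_B`, the space splits as `V = V_B ⊕ span X ⊕ span Y`, with `V_A = V_B ⊕ span X`
complementary to `span Y` and `V_C = V_B ⊕ span Y` complementary to `span X`. Pulling `β_A`, `β_C`
and their common restriction `β_B` back along the projections `p_A`, `p_C`, `p_B` onto `V_A`, `V_C`,
`V_B` gives, by inclusion–exclusion,
`β_A(p_A u, p_A v) + β_C(p_C u, p_C v) - β_B(p_B u, p_B v)`: on `V_A` the projection `p_C` agrees
with `p_B`, so the last two terms cancel, and symmetrically on `V_C`. This form vanishes on
`span X × span Y`. Adding `F - Fᵀ`, where `F(u, v) = Φ(π_X u, π_Y v)` and `Φ` is the bilinear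
extension of `φ` to `span X × span Y`, prescribes the values on `X × Y`, keeps the form alternating,
and does not change it on `V_A` or `V_C`, where `π_Y` resp. `π_X` vanishes.
-/

open Submodule

theorem isCompl_sup_of_inf_le {α : Type*} [Lattice α] [BoundedOrder α] {b x y : α}
    (hsup : (b ⊔ x) ⊔ (b ⊔ y) = ⊤) (hinf : (b ⊔ x) ⊓ (b ⊔ y) ≤ b)
    (hby : Disjoint b y) :
    IsCompl (b ⊔ x) y where
  disjoint := disjoint_iff_inf_le.mpr <|
    (le_inf ((inf_le_inf_left _ le_sup_right).trans hinf) inf_le_right).trans hby.le_bot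
  codisjoint := codisjoint_iff_le_sup.mpr <|
    hsup ▸ sup_le le_sup_left (sup_le (le_sup_left.trans le_sup_left) le_sup_right)

theorem isCompl_of_isCompl_sup_of_isCompl_sup {α : Type*} [Lattice α] [BoundedOrder α]
    [IsModularLattice α] {b x y : α} (hA : IsCompl (b ⊔ x) y) (hC : IsCompl (b ⊔ y) x) :
    IsCompl b (x ⊔ y) :=
  (hC.disjoint.mono_left le_sup_left).isCompl_sup_right_of_isCompl_sup_left hA

theorem Submodule.projectionOnto_eq_inclusion_of_mem_sup {R E : Type*} [Ring R]
    [AddCommGroup E] [Module R E] {p q p' q' : Submodule R E} (h : IsCompl p q)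
    (h' : IsCompl p' q') (hp : p ≤ p') (hq : q' ≤ q) {u : E} (hu : u ∈ p ⊔ q') :
    p'.projectionOnto q' h' u = inclusion hp (p.projectionOnto q h u) := by
  obtain ⟨a, ha, b, hb, rfl⟩ := mem_sup.mp hu
  ext
  simp [projection_apply_of_mem_left, projection_apply_of_mem_right, ha, hb, hp ha, hq hb]

theorem exists_bilinear_on_span_of_linearIndependent {R M N W : Type*} [CommRing R]
    [AddCommGroup M] [Module R M] [AddCommGroup N] [Module R N] [AddCommGroup W] [Module R W]
    {X : Set M} {Y : Set N} (hX : LinearIndependent R ((↑) : X → M))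
    (hY : LinearIndependent R ((↑) : Y → N)) (φ : X → Y → W) :
    ∃ Φ : span R X →ₗ[R] span R Y →ₗ[R] W,
      ∀ (x : X) (y : Y), Φ ⟨x, subset_span x.2⟩ ⟨y, subset_span y.2⟩ = φ x y := by
  let bX := (Module.Basis.span hX).map (LinearEquiv.ofEq _ _ (by rw [Subtype.range_coe]))
  let bY := (Module.Basis.span hY).map (LinearEquiv.ofEq _ _ (by rw [Subtype.range_coe]))
  refine ⟨bX.constr R fun x => bY.constr R (φ x), fun x y => ?_⟩
  have hx : (⟨x, subset_span x.2⟩ : span R X) = bX x := by ext; simp [bX]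
  have hy : (⟨y, subset_span y.2⟩ : span R Y) = bY y := by ext; simp [bY]
  rw [hx, hy, Module.Basis.constr_basis, Module.Basis.constr_basis]

section Amalgam

variable {R V W : Type*} [CommRing R] [AddCommGroup V] [Module R V]
  [AddCommGroup W] [Module R W] {B X Y : Submodule R V}
  (hA : IsCompl (B ⊔ X) Y) (hC : IsCompl (B ⊔ Y) X)
  (βA : ↥(B ⊔ X) →ₗ[R] ↥(B ⊔ X) →ₗ[R] W) (βC : ↥(B ⊔ Y) →ₗ[R] ↥(B ⊔ Y) →ₗ[R] W)

noncomputable def amalgam : V →ₗ[R] V →ₗ[R] W :=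
  βA.compl₁₂ ((B ⊔ X).projectionOnto Y hA) ((B ⊔ X).projectionOnto Y hA) +
  βC.compl₁₂ ((B ⊔ Y).projectionOnto X hC) ((B ⊔ Y).projectionOnto X hC) -
  (βA.compl₁₂ (inclusion le_sup_left) (inclusion le_sup_left)).compl₁₂
    (B.projectionOnto _ (isCompl_of_isCompl_sup_of_isCompl_sup hA hC))
    (B.projectionOnto _ (isCompl_of_isCompl_sup_of_isCompl_sup hA hC))

theorem isAlt_amalgam (hAalt : βA.IsAlt) (hCalt : βC.IsAlt) : (amalgam hA hC βA βC).IsAlt := by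
  intro v
  simp [amalgam, hAalt.self_eq_zero, hCalt.self_eq_zero]

theorem amalgam_apply_of_mem_left
    (hagree : βA.compl₁₂ (inclusion le_sup_left) (inclusion le_sup_left) =
      βC.compl₁₂ (inclusion le_sup_left) (inclusion le_sup_left))
    {u v : V} (hu : u ∈ B ⊔ X) (hv : v ∈ B ⊔ X) :
    amalgam hA hC βA βC u v = βA ⟨u, hu⟩ ⟨v, hv⟩ := by
  have hB := isCompl_of_isCompl_sup_of_isCompl_sup hA hC
  simp only [amalgam, LinearMap.sub_apply, LinearMap.add_apply, LinearMap.compl₁₂_apply,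
    projectionOnto_apply_of_mem_left hA hu, projectionOnto_apply_of_mem_left hA hv, hagree,
    projectionOnto_eq_inclusion_of_mem_sup hB hC le_sup_left le_sup_left hu,
    projectionOnto_eq_inclusion_of_mem_sup hB hC le_sup_left le_sup_left hv, add_sub_cancel_right]

theorem amalgam_apply_of_mem_right {u v : V} (hu : u ∈ B ⊔ Y) (hv : v ∈ B ⊔ Y) :
    amalgam hA hC βA βC u v = βC ⟨u, hu⟩ ⟨v, hv⟩ := by
  have hB := isCompl_of_isCompl_sup_of_isCompl_sup hA hC
  simp only [amalgam, LinearMap.sub_apply, LinearMap.add_apply, LinearMap.compl₁₂_apply,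
    projectionOnto_apply_of_mem_left hC hu, projectionOnto_apply_of_mem_left hC hv,
    projectionOnto_eq_inclusion_of_mem_sup hB hA le_sup_left le_sup_right hu,
    projectionOnto_eq_inclusion_of_mem_sup hB hA le_sup_left le_sup_right hv, add_sub_cancel_left]

theorem amalgam_apply_of_mem_of_mem {x y : V} (hx : x ∈ X) (hy : y ∈ Y) :
    amalgam hA hC βA βC x y = 0 := by
  simp [amalgam, projectionOnto_apply_of_mem_right, hx, hy, mem_sup_left hx]

variable (Φ : X →ₗ[R] Y →ₗ[R] W)

noncomputable def crossTerm : V →ₗ[R] V →ₗ[R] W :=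
  Φ.compl₁₂ (X.projectionOnto _ hC.symm) (Y.projectionOnto _ hA.symm) -
    (Φ.compl₁₂ (X.projectionOnto _ hC.symm) (Y.projectionOnto _ hA.symm)).flip

theorem isAlt_crossTerm : (crossTerm hA hC Φ).IsAlt := by
  intro v
  simp [crossTerm]

theorem crossTerm_apply_of_mem_left {u v : V} (hu : u ∈ B ⊔ X) (hv : v ∈ B ⊔ X) :
    crossTerm hA hC Φ u v = 0 := by
  simp [crossTerm, projectionOnto_apply_of_mem_right, hu, hv]

theorem crossTerm_apply_of_mem_right {u v : V} (hu : u ∈ B ⊔ Y) (hv : v ∈ B ⊔ Y) :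
    crossTerm hA hC Φ u v = 0 := by
  simp [crossTerm, projectionOnto_apply_of_mem_right, hu, hv]

theorem crossTerm_apply (x : X) (y : Y) : crossTerm hA hC Φ x y = Φ x y := by
  simp [crossTerm, projectionOnto_apply_of_mem_right, mem_sup_right y.2, mem_sup_right x.2]

end Amalgam

theorem bilinear_amalgamation_prescribed_general (p : ℕ)
    (V W : Type) [AddCommGroup V] [Module (ZMod p) V]
    [AddCommGroup W] [Module (ZMod p) W]
    (V_A V_C : Submodule (ZMod p) V) (hsup : V_A ⊔ V_C = ⊤)
    (V_B : Submodule (ZMod p) V) (hVB : V_B = V_A ⊓ V_C)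
    (β_A : V_A →ₗ[ZMod p] V_A →ₗ[ZMod p] W)
    (β_C : V_C →ₗ[ZMod p] V_C →ₗ[ZMod p] W)
    (hAalt : ∀ x : V_A, β_A x x = 0)
    (hCalt : ∀ x : V_C, β_C x x = 0)
    (hagree : ∀ (x y : V) (hxA : x ∈ V_A) (hxC : x ∈ V_C) (hyA : y ∈ V_A) (hyC : y ∈ V_C),
      β_A ⟨x, hxA⟩ ⟨y, hyA⟩ = β_C ⟨x, hxC⟩ ⟨y, hyC⟩)
    (X Y : Set V)
    (hXli : LinearIndependent (ZMod p) ((↑) : X → V))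
    (hYli : LinearIndependent (ZMod p) ((↑) : Y → V))
    (hXcompl : Disjoint V_B (Submodule.span (ZMod p) X) ∧
      V_B ⊔ Submodule.span (ZMod p) X = V_A)
    (hYcompl : Disjoint V_B (Submodule.span (ZMod p) Y) ∧
      V_B ⊔ Submodule.span (ZMod p) Y = V_C)
    (φ : X → Y → W) :
    ∃ β_D : V →ₗ[ZMod p] V →ₗ[ZMod p] W,
      (∀ x : V, β_D x x = 0) ∧
      (∀ (x y : V) (hx : x ∈ V_A) (hy : y ∈ V_A), β_D x y = β_A ⟨x, hx⟩ ⟨y, hy⟩) ∧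
      (∀ (x y : V) (hx : x ∈ V_C) (hy : y ∈ V_C), β_D x y = β_C ⟨x, hx⟩ ⟨y, hy⟩) ∧
      (∀ (x : X) (y : Y), β_D (x : V) (y : V) = φ x y) := by
  obtain ⟨hBX, rfl⟩ := hXcompl
  obtain ⟨hBY, rfl⟩ := hYcompl
  have hA := isCompl_sup_of_inf_le hsup hVB.ge hBY
  have hC := isCompl_sup_of_inf_le (sup_comm (V_B ⊔ _) _ ▸ hsup)
    (inf_comm (V_B ⊔ _) _ ▸ hVB.ge) hBX
  have hagreeB : β_A.compl₁₂ (inclusion le_sup_left) (inclusion le_sup_left) =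
      β_C.compl₁₂ (inclusion le_sup_left) (inclusion le_sup_left) :=
    LinearMap.ext₂ fun b b' => hagree b b' _ _ _ _
  obtain ⟨Φ, hΦ⟩ := exists_bilinear_on_span_of_linearIndependent hXli hYli φ
  refine ⟨amalgam hA hC β_A β_C + crossTerm hA hC Φ, fun v => ?_, fun u v hu hv => ?_,
    fun u v hu hv => ?_, fun x y => ?_⟩
  · rw [LinearMap.add_apply, LinearMap.add_apply,
      (isAlt_amalgam hA hC β_A β_C hAalt hCalt).self_eq_zero,
      (isAlt_crossTerm hA hC Φ).self_eq_zero, add_zero]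
  · rw [LinearMap.add_apply, LinearMap.add_apply,
      amalgam_apply_of_mem_left hA hC β_A β_C hagreeB hu hv,
      crossTerm_apply_of_mem_left hA hC Φ hu hv, add_zero]
  · rw [LinearMap.add_apply, LinearMap.add_apply,
      amalgam_apply_of_mem_right hA hC β_A β_C hu hv,
      crossTerm_apply_of_mem_right hA hC Φ hu hv, add_zero]
  · rw [LinearMap.add_apply, LinearMap.add_apply,
      amalgam_apply_of_mem_of_mem hA hC β_A β_C (subset_span x.2) (subset_span y.2), zero_add]
    exact (crossTerm_apply hA hC Φ ⟨x, subset_span x.2⟩ ⟨y, subset_span y.2⟩).trans (hΦ x y)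

/-- Amalgamation of alternating bilinear maps with prescribed values on a pair of
bases: given alternating bilinear maps on `V_A` and `V_C` agreeing on `V_B = V_A ⊓ V_C`,
a basis `X` of a complement of `V_B` in `V_A`, a basis `Y` of a complement of `V_B`
in `V_C`, and an arbitrary function `φ : X × Y → W`, there is a common alternating
bilinear extension `β_D` to `V = V_A ⊔ V_C` with `β_D(x,y) = φ(x,y)` for `x ∈ X`, `y ∈ Y`. -/
theorem bilinear_amalgamation_prescribed (p : ℕ) (hp : p.Prime)
    (V W : Type) [AddCommGroup V] [Module (ZMod p) V]
    [AddCommGroup W] [Module (ZMod p) W]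
    (V_A V_C : Submodule (ZMod p) V) (hsup : V_A ⊔ V_C = ⊤)
    (V_B : Submodule (ZMod p) V) (hVB : V_B = V_A ⊓ V_C)
    (β_A : V_A →ₗ[ZMod p] V_A →ₗ[ZMod p] W)
    (β_C : V_C →ₗ[ZMod p] V_C →ₗ[ZMod p] W)
    (hAalt : ∀ x : V_A, β_A x x = 0)
    (hCalt : ∀ x : V_C, β_C x x = 0)
    (hagree : ∀ (x y : V) (hxA : x ∈ V_A) (hxC : x ∈ V_C) (hyA : y ∈ V_A) (hyC : y ∈ V_C),
      β_A ⟨x, hxA⟩ ⟨y, hyA⟩ = β_C ⟨x, hxC⟩ ⟨y, hyC⟩)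
    (X Y : Set V)
    (hXA : X ⊆ (V_A : Set V)) (hYC : Y ⊆ (V_C : Set V))
    (hXli : LinearIndependent (ZMod p) ((↑) : X → V))
    (hYli : LinearIndependent (ZMod p) ((↑) : Y → V))
    (hXcompl : Disjoint V_B (Submodule.span (ZMod p) X) ∧
      V_B ⊔ Submodule.span (ZMod p) X = V_A)
    (hYcompl : Disjoint V_B (Submodule.span (ZMod p) Y) ∧
      V_B ⊔ Submodule.span (ZMod p) Y = V_C)
    (φ : X → Y → W) :
    ∃ β_D : V →ₗ[ZMod p] V →ₗ[ZMod p] W,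
      (∀ x : V, β_D x x = 0) ∧
      (∀ (x y : V) (hx : x ∈ V_A) (hy : y ∈ V_A), β_D x y = β_A ⟨x, hx⟩ ⟨y, hy⟩) ∧
      (∀ (x y : V) (hx : x ∈ V_C) (hy : y ∈ V_C), β_D x y = β_C ⟨x, hx⟩ ⟨y, hy⟩) ∧
      (∀ (x : X) (y : Y), β_D (x : V) (y : V) = φ x y) :=
  bilinear_amalgamation_prescribed_general p V W V_A V_C hsup V_B hVB β_A β_C hAalt hCalt hagree X Y
    hXli hYli hXcompl hYcompl φ
end

section
/- Let p be an odd prime, let V and W be vector spaces over 𝔽_p, and let β : V × V → W be an alternating bilinear map. Then there exist a group G of exponent p (g^p = 1 for all g ∈ G), an injective group homomorphism ι : Multiplicative W →* G whose range is contained in the center of G, and a surjective group homomorphism π : G →* Multiplicative V whose kernel equals the range of ι, such that for all g, h ∈ G the commutator satisfies ⁅g,h⁆ = ι(β(π g, π h)). In particular G is nilpotent of class ≤ 2 with [G,G] ⊆ ι(W) ⊆ Z(G), and β is the alternating bilinear map induced by the commutator on G/ι(W). (Surjectivity on objects of the functor F from 2-nilpotent exponent-p groups to alternating bilinear maps.)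 -/
/-!
For a bilinear `c : V → V → W` the rule `(v, w) * (v', w') = (v + v', w + w' + c v v')` makes
`V × W` a central extension of `V` by `W` whose commutator map is `c v v' - c v' v`. Taking
`c = β / 2` (possible since `p` is odd) realizes `β` as the commutator map, and since `c` is
alternating the powers are `(v, w) ^ n = (n • v, n • w)`, so the group has exponent `p`.
-/

open scoped commutatorElement

namespace LinearMap.IsAlt

variable {K V W : Type*} [CommRing K] [AddCommGroup V] [Module K V] [AddCommGroup W] [Module K W]
  {β : V →ₗ[K] V →ₗ[K] W}

theorem invOf_two_smul [Invertible (2 : K)] (H : β.IsAlt) : ((⅟2 : K) • β).IsAlt := fun x => by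
  simp [H.self_eq_zero x]

theorem invOf_two_smul_sub_swap [Invertible (2 : K)] (H : β.IsAlt) (x y : V) :
    ((⅟2 : K) • β) x y - ((⅟2 : K) • β) y x = β x y := by
  rw [smul_apply, smul_apply, smul_apply, smul_apply, ← H.neg x y, ← smul_sub, sub_neg_eq_add,
    ← two_smul K, smul_smul, invOf_mul_self, one_smul]

end LinearMap.IsAlt

@[ext]
structure HeisenbergGroup {K V W : Type*} [CommRing K] [AddCommGroup V] [Module K V]
    [AddCommGroup W] [Module K W] (c : V →ₗ[K] V →ₗ[K] W) where
  fst : V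
  snd : W

namespace HeisenbergGroup

variable {K V W : Type*} [CommRing K] [AddCommGroup V] [Module K V] [AddCommGroup W] [Module K W]
  {c : V →ₗ[K] V →ₗ[K] W}

instance : Mul (HeisenbergGroup c) := ⟨fun g h => ⟨g.fst + h.fst, g.snd + h.snd + c g.fst h.fst⟩⟩

instance : One (HeisenbergGroup c) := ⟨⟨0, 0⟩⟩

instance : Inv (HeisenbergGroup c) := ⟨fun g => ⟨-g.fst, -g.snd + c g.fst g.fst⟩⟩

@[simp] theorem fst_mul (g h : HeisenbergGroup c) : (g * h).fst = g.fst + h.fst := rfl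
@[simp] theorem snd_mul (g h : HeisenbergGroup c) :
    (g * h).snd = g.snd + h.snd + c g.fst h.fst := rfl
@[simp] theorem fst_one : (1 : HeisenbergGroup c).fst = 0 := rfl
@[simp] theorem snd_one : (1 : HeisenbergGroup c).snd = 0 := rfl
@[simp] theorem fst_inv (g : HeisenbergGroup c) : g⁻¹.fst = -g.fst := rfl
@[simp] theorem snd_inv (g : HeisenbergGroup c) : g⁻¹.snd = -g.snd + c g.fst g.fst := rfl

instance : Group (HeisenbergGroup c) where
  mul_assoc g h k := by ext <;> simp <;> abel
  one_mul g := by ext <;> simp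
  mul_one g := by ext <;> simp
  inv_mul_cancel g := by ext <;> simp

variable (c) in
def inr : Multiplicative W →* HeisenbergGroup c where
  toFun w := ⟨0, w.toAdd⟩
  map_one' := rfl
  map_mul' v w := by ext <;> simp

variable (c) in
def fstHom : HeisenbergGroup c →* Multiplicative V where
  toFun g := .ofAdd g.fst
  map_one' := rfl
  map_mul' _ _ := rfl

@[simp] theorem fst_inr (w : Multiplicative W) : (inr c w).fst = 0 := rfl
@[simp] theorem snd_inr (w : Multiplicative W) : (inr c w).snd = w.toAdd := rfl
@[simp] theorem fstHom_apply (g : HeisenbergGroup c) : fstHom c g = .ofAdd g.fst := rfl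

theorem inr_injective : Function.Injective (inr c) := fun _ _ h => congrArg snd h

theorem range_inr_le_center : (inr c).range ≤ Subgroup.center (HeisenbergGroup c) := by
  rintro _ ⟨w, rfl⟩
  refine Subgroup.mem_center_iff.2 fun g => ?_
  ext <;> simp [add_comm]

theorem fstHom_surjective : Function.Surjective (fstHom c) := fun v => ⟨⟨v.toAdd, 0⟩, rfl⟩

theorem ker_fstHom : (fstHom c).ker = (inr c).range := by
  ext g
  refine ⟨fun hg => ⟨.ofAdd g.snd, ?_⟩, ?_⟩
  · ext
    · simpa using (congrArg Multiplicative.toAdd hg).symm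
    · simp
  · rintro ⟨w, rfl⟩
    simp [MonoidHom.mem_ker]

theorem commutatorElement_eq (g h : HeisenbergGroup c) :
    ⁅g, h⁆ = inr c (.ofAdd (c g.fst h.fst - c h.fst g.fst)) := by
  ext <;> simp [commutatorElement_def, -ofAdd_sub]; abel

theorem pow_eq_of_isAlt (hc : c.IsAlt) (g : HeisenbergGroup c) (n : ℕ) :
    g ^ n = ⟨n • g.fst, n • g.snd⟩ := by
  induction n with
  | zero => ext <;> simp
  | succ n ih => ext <;> simp [pow_succ, ih, succ_nsmul, hc.self_eq_zero]

theorem pow_char_eq_one_of_isAlt (p : ℕ) [CharP K p] (hc : c.IsAlt) (g : HeisenbergGroup c) :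
    g ^ p = 1 := by
  rw [pow_eq_of_isAlt hc, ← Nat.cast_smul_eq_nsmul K, ← Nat.cast_smul_eq_nsmul K,
    CharP.cast_eq_zero, zero_smul, zero_smul]
  rfl

end HeisenbergGroup

theorem exists_group_realizing_alternating_bilinear_general (p : ℕ) (hodd : Odd p)
    (V W : Type) [AddCommGroup V] [Module (ZMod p) V]
    [AddCommGroup W] [Module (ZMod p) W]
    (β : V →ₗ[ZMod p] V →ₗ[ZMod p] W) (halt : ∀ x : V, β x x = 0) :
    ∃ (G : Type) (_ : Group G) (ι : Multiplicative W →* G) (π : G →* Multiplicative V),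
      (∀ g : G, g ^ p = 1) ∧
      Function.Injective ι ∧
      ι.range ≤ Subgroup.center G ∧
      Function.Surjective π ∧
      π.ker = ι.range ∧
      (∀ g h : G, ⁅g, h⁆ =
        ι (Multiplicative.ofAdd (β (Multiplicative.toAdd (π g)) (Multiplicative.toAdd (π h))))) := by
  have hβ : β.IsAlt := halt
  have : Invertible (2 : ZMod p) :=
    ((ZMod.isUnit_iff_coprime 2 p).2 (Nat.coprime_two_left.2 hodd)).invertible
  let c := (⅟2 : ZMod p) • β
  refine ⟨HeisenbergGroup c, inferInstance, HeisenbergGroup.inr c, HeisenbergGroup.fstHom c,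
    HeisenbergGroup.pow_char_eq_one_of_isAlt p hβ.invOf_two_smul,
    HeisenbergGroup.inr_injective, HeisenbergGroup.range_inr_le_center,
    HeisenbergGroup.fstHom_surjective, HeisenbergGroup.ker_fstHom, fun g h => ?_⟩
  rw [HeisenbergGroup.commutatorElement_eq, hβ.invOf_two_smul_sub_swap]
  rfl

/-- Every alternating bilinear map `β : V × V → W` over `𝔽_p` (`p` an odd prime) is
realized as the commutator map of a group `G` of exponent `p` which is a central
extension of `Multiplicative V` by `Multiplicative W`. -/
theorem exists_group_realizing_alternating_bilinear (p : ℕ) (hp : p.Prime) (hodd : Odd p)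
    (V W : Type) [AddCommGroup V] [Module (ZMod p) V]
    [AddCommGroup W] [Module (ZMod p) W]
    (β : V →ₗ[ZMod p] V →ₗ[ZMod p] W) (halt : ∀ x : V, β x x = 0) :
    ∃ (G : Type) (_ : Group G) (ι : Multiplicative W →* G) (π : G →* Multiplicative V),
      (∀ g : G, g ^ p = 1) ∧
      Function.Injective ι ∧
      ι.range ≤ Subgroup.center G ∧
      Function.Surjective π ∧
      π.ker = ι.range ∧
      (∀ g h : G, ⁅g, h⁆ =
        ι (Multiplicative.ofAdd (β (Multiplicative.toAdd (π g)) (Multiplicative.toAdd (π h))))) :=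
  exists_group_realizing_alternating_bilinear_general p hodd V W β halt
end

section
/- Let p be an odd prime and let W, V_G, V_H be vector spaces over 𝔽_p. Let G and H be groups of exponent p equipped with: injective homomorphisms ι_G : Multiplicative W →* G and ι_H : Multiplicative W →* H with central ranges; surjective homomorphisms π_G : G →* Multiplicative V_G and π_H : H →* Multiplicative V_H with kernels equal to the ranges of ι_G and ι_H respectively; and alternating bilinear maps β_G : V_G × V_G → W, β_H : V_H × V_H → W such that ⁅g,g'⁆ = ι_G(β_G(π_G g, π_G g')) for all g,g' ∈ G and ⁅h,h'⁆ = ι_H(β_H(π_H h, π_H h')) for all h,h' ∈ H. Suppose u : V_G → V_H is an injective linear map with β_H(u x, u y) = β_G(x, y) for all x, y ∈ V_G. Then there exists an injective group homomorphism f : G →* H with f ∘ ι_G = ι_H and π_H ∘ f = u ∘ π_G. (Lifting of morphisms along the functor F.) -/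
/-!
Baer's trick: since `p` is odd, `a + b := a * b * ι (-½ β (π a) (π b))` makes a group of exponent
`p` with central `ι` and commutator `β` into an `𝔽_p`-vector space on which `π` is linear. A linear
section `s` of `π` then satisfies `s x * s y = s (x + y) * ι (½ β x y)`, so every element of `G` is
uniquely `s x * ι w` and the multiplication of `G` is determined by `½ β`. Hence
`s_G x * ι_G w ↦ s_H (u x) * ι_H w` is a homomorphism as soon as `u` carries `β_G` to `β_H`, and it
is injective because `u` and `ι_H` are.
-/

open Multiplicative
open scoped commutatorElement

section CentralExtension

variable {W V G : Type*} [AddCommGroup W] [AddCommGroup V] [Group G]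
  {ι : Multiplicative W →* G} {π : G →* Multiplicative V}

lemma commute_of_range_le_center (hcent : ι.range ≤ Subgroup.center G) (w : Multiplicative W)
    (g : G) : Commute (ι w) g :=
  (Subgroup.mem_center_iff.mp (hcent ⟨w, rfl⟩) g).symm

lemma apply_eq_one_of_range_le_ker (hιπ : ι.range ≤ π.ker) (w : Multiplicative W) :
    π (ι w) = 1 :=
  hιπ ⟨w, rfl⟩

variable (ι π) in
structure IsSectionWithFactorSet (c : V → V → W) (s : V → G) : Prop where
  apply_zero : s 0 = 1
  π_apply : ∀ x, π (s x) = ofAdd x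
  apply_mul_apply : ∀ x y, s x * s y = s (x + y) * ι (ofAdd (c x y))

namespace IsSectionWithFactorSet

variable {c : V → V → W} {s : V → G}

lemma mul_ι_mul_mul_ι (hs : IsSectionWithFactorSet ι π c s) (hcent : ι.range ≤ Subgroup.center G)
    (x y : V) (w w' : Multiplicative W) :
    s x * ι w * (s y * ι w') = s (x + y) * ι (ofAdd (c x y) * w * w') := by
  rw [mul_assoc, ← mul_assoc (ι w), (commute_of_range_le_center hcent w _).eq, mul_assoc,
    ← mul_assoc, hs.apply_mul_apply, map_mul, map_mul, mul_assoc, mul_assoc]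

lemma π_mul_ι (hs : IsSectionWithFactorSet ι π c s) (hιπ : ι.range ≤ π.ker) (x : V)
    (w : Multiplicative W) : π (s x * ι w) = ofAdd x := by
  rw [map_mul, apply_eq_one_of_range_le_ker hιπ, mul_one, hs.π_apply]

lemma exists_eq_mul_ι (hs : IsSectionWithFactorSet ι π c s) (hker : π.ker ≤ ι.range) (g : G) :
    ∃ x w, g = s x * ι w := by
  obtain ⟨w, hw⟩ := hker (show (s (toAdd (π g)))⁻¹ * g ∈ π.ker by
    rw [MonoidHom.mem_ker, map_mul, map_inv, hs.π_apply, ofAdd_toAdd, inv_mul_cancel])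
  exact ⟨toAdd (π g), w, by rw [hw, mul_inv_cancel_left]⟩

lemma eq_and_eq_of_mul_ι_eq (hs : IsSectionWithFactorSet ι π c s) (hιπ : ι.range ≤ π.ker)
    (hι : Function.Injective ι) {x y : V} {w w' : Multiplicative W}
    (h : s x * ι w = s y * ι w') : x = y ∧ w = w' := by
  obtain rfl : x = y := by simpa [hs.π_mul_ι hιπ] using congrArg π h
  exact ⟨rfl, hι (mul_left_cancel h)⟩

end IsSectionWithFactorSet

end CentralExtension

section Lift

variable {W V_G V_H G H : Type*} [AddCommGroup W] [AddCommGroup V_G] [AddCommGroup V_H]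
  [Group G] [Group H] {ιG : Multiplicative W →* G} {ιH : Multiplicative W →* H}
  {πG : G →* Multiplicative V_G} {πH : H →* Multiplicative V_H}

lemma exists_monoidHom_of_sections (hιG : Function.Injective ιG) (hkerG : πG.ker = ιG.range)
    (hcentG : ιG.range ≤ Subgroup.center G) (hcentH : ιH.range ≤ Subgroup.center H)
    (hιπH : ιH.range ≤ πH.ker) {cG : V_G → V_G → W} {cH : V_H → V_H → W} {sG : V_G → G}
    {sH : V_H → H} (hsG : IsSectionWithFactorSet ιG πG cG sG)
    (hsH : IsSectionWithFactorSet ιH πH cH sH) (u : V_G →+ V_H)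
    (hu : ∀ x y, cH (u x) (u y) = cG x y) :
    ∃ f : G →* H, (∀ w, f (ιG w) = ιH w) ∧ ∀ g, πH (f g) = ofAdd (u (toAdd (πG g))) := by
  choose x w hxw using hsG.exists_eq_mul_ι hkerG.le
  let f₀ : G → H := fun g ↦ sH (u (x g)) * ιH (w g)
  have hf₀ (y : V_G) (v : Multiplicative W) : f₀ (sG y * ιG v) = sH (u y) * ιH v := by
    obtain ⟨hy, hv⟩ := hsG.eq_and_eq_of_mul_ι_eq hkerG.ge hιG (hxw (sG y * ιG v)).symm
    simp only [f₀, hy, hv]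
  let f : G →* H := MonoidHom.mk' f₀ fun g g' ↦ by
    rw [hxw g, hxw g', hsG.mul_ι_mul_mul_ι hcentG, hf₀, hf₀, hf₀, hsH.mul_ι_mul_mul_ι hcentH,
      map_add, hu]
  refine ⟨f, fun v ↦ ?_, fun g ↦ ?_⟩
  · have : f (sG 0 * ιG v) = ιH v := by
      rw [MonoidHom.mk'_apply, hf₀, map_zero, hsH.apply_zero, one_mul]
    rwa [hsG.apply_zero, one_mul] at this
  · rw [hxw g, MonoidHom.mk'_apply, hf₀, hsH.π_mul_ι hιπH, hsG.π_mul_ι hkerG.ge, toAdd_ofAdd]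

lemma injective_of_map_ι_of_map_π {u : V_G →+ V_H} (hu : Function.Injective u)
    (hιH : Function.Injective ιH) (hkerG : πG.ker ≤ ιG.range) (f : G →* H)
    (hfι : ∀ w, f (ιG w) = ιH w) (hfπ : ∀ g, πH (f g) = ofAdd (u (toAdd (πG g)))) :
    Function.Injective f := by
  refine (injective_iff_map_eq_one f).mpr fun g hg ↦ ?_
  have hπg : πG g = 1 := by
    have h := hfπ g
    rwa [hg, map_one, eq_comm, ofAdd_eq_one, map_eq_zero_iff u hu, toAdd_eq_zero] at h
  obtain ⟨w, rfl⟩ := hkerG hπg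
  rw [hfι, ← map_one ιH] at hg
  rw [hιH hg, map_one]

end Lift

section Baer

variable {R W V G : Type*} [CommRing R] [Invertible (2 : R)] [AddCommGroup W] [Module R W]
  [AddCommGroup V] [Module R V] [Group G]
  (ι : Multiplicative W →* G) (π : G →* Multiplicative V) (β : V →ₗ[R] V →ₗ[R] W)

def baerAdd (a b : G) : G :=
  a * b * ι (ofAdd (-((⅟2 : R) • β (toAdd (π a)) (toAdd (π b)))))

variable {ι π β}

lemma eq_baerAdd_iff {a b c : G} :
    c = baerAdd ι π β a b ↔ a * b = c * ι (ofAdd ((⅟2 : R) • β (toAdd (π a)) (toAdd (π b)))) := by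
  rw [baerAdd, ofAdd_neg, map_inv, eq_mul_inv_iff_mul_eq, eq_comm]

lemma π_baerAdd (hιπ : ι.range ≤ π.ker) (a b : G) : π (baerAdd ι π β a b) = π a * π b := by
  rw [baerAdd, map_mul, apply_eq_one_of_range_le_ker hιπ, mul_one, map_mul]

lemma baerAdd_assoc (hcent : ι.range ≤ Subgroup.center G) (hιπ : ι.range ≤ π.ker) (a b c : G) :
    baerAdd ι π β (baerAdd ι π β a b) c = baerAdd ι π β a (baerAdd ι π β b c) := by
  simp only [baerAdd, map_mul, apply_eq_one_of_range_le_ker hιπ, mul_one, toAdd_mul, map_add,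
    LinearMap.add_apply]
  rw [mul_assoc _ _ c, (commute_of_range_le_center hcent _ c).eq]
  simp only [mul_assoc, ← map_mul, ← ofAdd_add]
  congr 4
  exact congrArg ofAdd (by module)

lemma one_baerAdd (a : G) : baerAdd ι π β 1 a = a := by
  simp [baerAdd]

lemma inv_baerAdd (halt : β.IsAlt) (a : G) : baerAdd ι π β a⁻¹ a = 1 := by
  simp [baerAdd, halt.self_eq_zero]

lemma baerAdd_comm (hcent : ι.range ≤ Subgroup.center G) (halt : β.IsAlt)
    (hcomm : ∀ g g' : G, ⁅g, g'⁆ = ι (ofAdd (β (toAdd (π g)) (toAdd (π g'))))) (a b : G) :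
    baerAdd ι π β a b = baerAdd ι π β b a := by
  have hswap : b * a = a * b * ι (ofAdd (-β (toAdd (π a)) (toAdd (π b)))) := by
    rw [halt.neg, ← (commute_of_range_le_center hcent _ _).eq, ← hcomm, commutatorElement_def]
    group
  rw [baerAdd, baerAdd, hswap, mul_assoc _ (ι _), ← map_mul, ← ofAdd_add, ← halt.neg]
  congr 3
  linear_combination (norm := module)
    (invOf_two_add_invOf_two (R := R)) • β (toAdd (π b)) (toAdd (π a))

lemma baerAdd_pow_self (halt : β.IsAlt) (a : G) (n : ℕ) : baerAdd ι π β (a ^ n) a = a ^ (n + 1) := by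
  simp [baerAdd, halt.self_eq_zero, pow_succ]

abbrev baerAddCommGroup (hcent : ι.range ≤ Subgroup.center G) (hιπ : ι.range ≤ π.ker)
    (halt : β.IsAlt)
    (hcomm : ∀ g g' : G, ⁅g, g'⁆ = ι (ofAdd (β (toAdd (π g)) (toAdd (π g'))))) :
    AddCommGroup G :=
  letI : Add G := ⟨baerAdd ι π β⟩
  letI : Zero G := ⟨1⟩
  letI : Neg G := ⟨fun a ↦ a⁻¹⟩
  { AddGroup.ofLeftAxioms (baerAdd_assoc hcent hιπ) one_baerAdd (inv_baerAdd halt) with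
    add_comm := baerAdd_comm hcent halt hcomm }

end Baer

lemma exists_section_half_commutator {p : ℕ} [NeZero p] [Invertible (2 : ZMod p)]
    {W V G : Type*} [AddCommGroup W] [Module (ZMod p) W] [AddCommGroup V] [Module (ZMod p) V]
    [Module.Projective (ZMod p) V] [Group G] {ι : Multiplicative W →* G}
    {π : G →* Multiplicative V} {β : V →ₗ[ZMod p] V →ₗ[ZMod p] W} (hexp : ∀ g : G, g ^ p = 1)
    (hcent : ι.range ≤ Subgroup.center G) (hιπ : ι.range ≤ π.ker)
    (hsurj : Function.Surjective π) (halt : β.IsAlt)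
    (hcomm : ∀ g g' : G, ⁅g, g'⁆ = ι (ofAdd (β (toAdd (π g)) (toAdd (π g'))))) :
    ∃ s : V → G, IsSectionWithFactorSet ι π (fun x y ↦ (⅟2 : ZMod p) • β x y) s := by
  let _ := baerAddCommGroup hcent hιπ halt hcomm
  have nsmul_eq_pow (n : ℕ) (a : G) : n • a = a ^ n := by
    induction n with
    | zero => rw [zero_nsmul, pow_zero]; rfl
    | succ n ih => rw [succ_nsmul, ih]; exact baerAdd_pow_self halt a n
  -- Kept opaque: unfolding `AddCommMonoid.zmodModule` (a `match` on `p`) leaves the coercion of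
  -- linear maps into `G` stuck.
  obtain ⟨_⟩ : Nonempty (Module (ZMod p) G) :=
    ⟨AddCommMonoid.zmodModule fun a ↦ (nsmul_eq_pow p a).trans (hexp a)⟩
  let πlin : G →ₗ[ZMod p] V := AddMonoidHom.toZModLinearMap p
    { toFun := fun a ↦ toAdd (π a)
      map_zero' := by simp [show (0 : G) = 1 from rfl]
      map_add' := fun a b ↦ by simp [show a + b = baerAdd ι π β a b from rfl, π_baerAdd hιπ] }
  obtain ⟨σ, hσ⟩ := πlin.exists_rightInverse_of_surjective <| LinearMap.range_eq_top.mpr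
    fun x ↦ (hsurj (ofAdd x)).imp fun g hg ↦ by simp [πlin, hg]
  have hπσ (x : V) : π (σ x) = ofAdd x := congrArg ofAdd (LinearMap.congr_fun hσ x)
  refine ⟨⇑σ, map_zero σ, hπσ, fun x y ↦ ?_⟩
  have := eq_baerAdd_iff.mp (map_add σ x y)
  rwa [hπσ, hπσ] at this

/-- Lifting of morphisms along the functor `F` from 2-nilpotent exponent-`p` groups
to alternating bilinear maps: an injective linear map `u` between the
bilinearizations that preserves the bilinear maps lifts to an injective group
homomorphism `f : G →* H` fixing the centre `W` and inducing `u`. -/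
theorem exists_group_hom_lifting_linear (p : ℕ) (hp : p.Prime) (hodd : Odd p)
    (W V_G V_H : Type) [AddCommGroup W] [Module (ZMod p) W]
    [AddCommGroup V_G] [Module (ZMod p) V_G] [AddCommGroup V_H] [Module (ZMod p) V_H]
    (G H : Type) [Group G] [Group H]
    (hGexp : ∀ g : G, g ^ p = 1) (hHexp : ∀ h : H, h ^ p = 1)
    (ιG : Multiplicative W →* G) (ιH : Multiplicative W →* H)
    (hιGinj : Function.Injective ιG) (hιHinj : Function.Injective ιH)
    (hιGcent : ιG.range ≤ Subgroup.center G) (hιHcent : ιH.range ≤ Subgroup.center H)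
    (πG : G →* Multiplicative V_G) (πH : H →* Multiplicative V_H)
    (hπGsurj : Function.Surjective πG) (hπHsurj : Function.Surjective πH)
    (hkerG : πG.ker = ιG.range) (hkerH : πH.ker = ιH.range)
    (βG : V_G →ₗ[ZMod p] V_G →ₗ[ZMod p] W)
    (βH : V_H →ₗ[ZMod p] V_H →ₗ[ZMod p] W)
    (hβGalt : ∀ x : V_G, βG x x = 0) (hβHalt : ∀ x : V_H, βH x x = 0)
    (hcommG : ∀ g g' : G, ⁅g, g'⁆ =
      ιG (Multiplicative.ofAdd (βG (Multiplicative.toAdd (πG g)) (Multiplicative.toAdd (πG g')))))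
    (hcommH : ∀ h h' : H, ⁅h, h'⁆ =
      ιH (Multiplicative.ofAdd (βH (Multiplicative.toAdd (πH h)) (Multiplicative.toAdd (πH h')))))
    (u : V_G →ₗ[ZMod p] V_H) (huinj : Function.Injective u)
    (huβ : ∀ x y : V_G, βH (u x) (u y) = βG x y) :
    ∃ f : G →* H,
      Function.Injective f ∧
      (∀ w : Multiplicative W, f (ιG w) = ιH w) ∧
      (∀ g : G, πH (f g) = Multiplicative.ofAdd (u (Multiplicative.toAdd (πG g)))) := by
  have := Fact.mk hp
  have : Invertible (2 : ZMod p) :=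
    (ZMod.unitOfCoprime 2 (Nat.coprime_two_left.mpr hodd)).invertible.copy _ (by simp)
  obtain ⟨sG, hsG⟩ := exists_section_half_commutator hGexp hιGcent hkerG.ge hπGsurj hβGalt hcommG
  obtain ⟨sH, hsH⟩ := exists_section_half_commutator hHexp hιHcent hkerH.ge hπHsurj hβHalt hcommH
  obtain ⟨f, hfι, hfπ⟩ := exists_monoidHom_of_sections hιGinj hkerG hιGcent hιHcent hkerH.ge hsG hsH
    u.toAddMonoidHom fun x y ↦ by simp [huβ]
  exact ⟨f, injective_of_map_ι_of_map_π huinj hιHinj hkerG.le f hfι hfπ, hfι, hfπ⟩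
end

section
/- Let p be an odd prime and n a natural number. Let A, B, C be finite groups of exponent p with designated tuples c^A : Fin n → A, c^B : Fin n → B, c^C : Fin n → C such that in each group the subgroup P generated by the tuple satisfies [G,G] ≤ P ≤ Z(G) and P has order p^n (the tuple is linearly independent). Suppose f : B →* A and g : B →* C are injective homomorphisms with f(c^B i) = c^A i and g(c^B i) = c^C i for all i. Then there exist a finite group D of exponent p with a tuple c^D : Fin n → D satisfying the same conditions ([D,D] ≤ ⟨c^D⟩ ≤ Z(D) and ⟨c^D⟩ of order p^n), and injective homomorphisms f' : A →* D, g' : C →* D with f'(c^A i) = c^D i = g'(c^C i) for all i and f' ∘ f = g' ∘ g. (The amalgamation property for the class K(n).) -/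
/-- Membership in the class `𝕂(n)`: a group `G` of exponent `p` with a designated
tuple `c : Fin n → G` such that `[G,G] ≤ ⟨c⟩ ≤ Z(G)` and `⟨c⟩` has order `p ^ n`
(i.e. the tuple is linearly independent). -/
def MemKClass (p n : ℕ) (G : Type*) [Group G] (c : Fin n → G) : Prop :=
  (∀ g : G, g ^ p = 1) ∧
  commutator G ≤ Subgroup.closure (Set.range c) ∧
  Subgroup.closure (Set.range c) ≤ Subgroup.center G ∧
  Nat.card (Subgroup.closure (Set.range c)) = p ^ n

/-!
Baer's correspondence: in a group of odd exponent `p` whose commutators are central, the sum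
`x + y = x y [y, x]^{1/2}` makes the group an `𝔽_p`-vector space on which the commutator is an
alternating bilinear map with central values, and conversely such a bracket `β` on a vector space
defines a group by `x * y = x + y + β x y / 2` whose commutator is `β`. The amalgamation problem
thus becomes linear. Choose linear retractions `s` of `f` and `r` of `g`; the bracket on `A × C`
adds the bracket of `A`, the bracket of `C` transported to `A` through `f ∘ r`, and subtracts the
bracket of `B`, which both of them count. Its values lie in `f(P_B) = P_A`, which is central,
and `a ↦ (a, 0)`, `c ↦ (f (r c), c - g (r c))` are injective bracket-preserving maps agreeing
on `B`.
-/

open Function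
open scoped commutatorElement

section CentralCommutators

variable {G : Type*} [Group G]

theorem commutatorElement_eq_one_of_mem_center_right {c : G} (hc : c ∈ Subgroup.center G)
    (g : G) : ⁅g, c⁆ = 1 :=
  commutatorElement_eq_one_iff_mul_comm.mpr (Subgroup.mem_center_iff.mp hc g)

theorem commutatorElement_eq_one_of_mem_center_left {c : G} (hc : c ∈ Subgroup.center G)
    (g : G) : ⁅c, g⁆ = 1 :=
  commutatorElement_eq_one_iff_mul_comm.mpr (Subgroup.mem_center_iff.mp hc g).symm

theorem commutatorElement_mul_left_of_mem_center
    (h : ∀ x y : G, ⁅x, y⁆ ∈ Subgroup.center G) (x y z : G) :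
    ⁅x * y, z⁆ = ⁅x, z⁆ * ⁅y, z⁆ := by
  rw [commutatorElement_mul_left_eq_conj_mul, Subgroup.mem_center_iff.mp (h y z) x,
    mul_inv_cancel_right, Subgroup.mem_center_iff.mp (h y z)]

theorem commutatorElement_mul_right_of_mem_center
    (h : ∀ x y : G, ⁅x, y⁆ ∈ Subgroup.center G) (x y z : G) :
    ⁅x, y * z⁆ = ⁅x, y⁆ * ⁅x, z⁆ := by
  rw [commutatorElement_mul_right_eq_mul_conj, mul_assoc _ y,
    Subgroup.mem_center_iff.mp (h x z) y, ← mul_assoc, mul_inv_cancel_right]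

end CentralCommutators

theorem Subgroup.closure_range_comp {G H ι : Type*} [Group G] [Group H] (φ : G →* H)
    (c : ι → G) : closure (Set.range (φ ∘ c)) = (closure (Set.range c)).map φ := by
  rw [MonoidHom.map_closure, Set.range_comp]

instance ZMod.invertibleTwo {p : ℕ} [hp : Fact (Odd p)] : Invertible (2 : ZMod p) :=
  invertibleOfRightInverse _ (((p + 1) / 2 : ℕ) : ZMod p) <| by
    rw [← Nat.cast_ofNat, ← Nat.cast_mul, Nat.mul_div_cancel' hp.out.add_one.two_dvd,
      Nat.cast_add_one, ZMod.natCast_self, zero_add]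

structure TwoStepBracket (R V : Type*) [CommRing R] [AddCommGroup V] [Module R V] where
  toBilin : V →ₗ[R] V →ₗ[R] V
  isAlt : toBilin.IsAlt
  bracket_bracket' (x y z : V) : toBilin (toBilin x y) z = 0

namespace TwoStepBracket

variable {R V : Type*} [CommRing R] [AddCommGroup V] [Module R V]

instance : FunLike (TwoStepBracket R V) V (V →ₗ[R] V) where
  coe β := β.toBilin
  coe_injective β γ h := by cases β; cases γ; congr; exact LinearMap.ext (congrFun h)

instance : LinearMapClass (TwoStepBracket R V) R V (V →ₗ[R] V) where
  map_add β := β.toBilin.map_add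
  map_smulₛₗ β := β.toBilin.map_smul

variable (β : TwoStepBracket R V)

theorem self_eq_zero (x : V) : β x x = 0 := β.isAlt x

theorem neg_apply (x y : V) : -β x y = β y x := β.isAlt.neg x y

theorem bracket_bracket (x y z : V) : β (β x y) z = 0 := β.bracket_bracket' x y z

theorem apply_bracket (x y z : V) : β x (β y z) = 0 := by
  rw [← β.neg_apply, β.bracket_bracket, neg_zero]

structure IsDerivedLeLeCenter (P : Submodule R V) : Prop where
  bracket_mem (x y : V) : β x y ∈ P
  bracket_eq_zero {x : V} (hx : x ∈ P) (y : V) : β x y = 0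

end TwoStepBracket

def BaerGroup {R V : Type*} [CommRing R] [AddCommGroup V] [Module R V]
    (_β : TwoStepBracket R V) : Type _ := V

namespace BaerGroup

variable {R V W : Type*} [CommRing R] [AddCommGroup V] [Module R V] [AddCommGroup W] [Module R W]
  {β : TwoStepBracket R V}

def of : V ≃ BaerGroup β := Equiv.refl V

instance : One (BaerGroup β) := ⟨of 0⟩

instance : Inv (BaerGroup β) := ⟨fun x => of (-of.symm x)⟩

theorem of_zero : (of 0 : BaerGroup β) = 1 := rfl

theorem of_neg (x : V) : (of (-x) : BaerGroup β) = (of x)⁻¹ := rfl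

variable [Invertible (2 : R)]

instance : Mul (BaerGroup β) :=
  ⟨fun x y => of (of.symm x + of.symm y + (⅟2 : R) • β (of.symm x) (of.symm y))⟩

theorem of_mul_of (x y : V) :
    (of x : BaerGroup β) * of y = of (x + y + (⅟2 : R) • β x y) := rfl

instance : Group (BaerGroup β) where
  mul_assoc := of.surjective.forall₃.2 fun x y z => by
    simp only [of_mul_of, map_add, LinearMap.add_apply, map_smul, LinearMap.smul_apply,
      β.bracket_bracket, β.apply_bracket, smul_zero, add_zero]
    congr 1
    module
  one_mul := of.surjective.forall.2 fun x => by simp [← of_zero, of_mul_of]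
  mul_one := of.surjective.forall.2 fun x => by simp [← of_zero, of_mul_of]
  inv_mul_cancel := of.surjective.forall.2 fun x => by
    simp [← of_neg, ← of_zero, of_mul_of, β.self_eq_zero]

theorem of_nsmul (k : ℕ) (x : V) : (of (k • x) : BaerGroup β) = of x ^ k := by
  induction k with
  | zero => rw [zero_smul, pow_zero, of_zero]
  | succ k ih => simp [pow_succ, ← ih, of_mul_of, β.self_eq_zero, succ_nsmul]

theorem pow_eq_one (p : ℕ) [CharP R p] (x : BaerGroup β) : x ^ p = 1 := by
  rw [← of.apply_symm_apply x, ← of_nsmul, ← Nat.cast_smul_eq_nsmul R, CharP.cast_eq_zero R,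
    zero_smul, of_zero]

theorem commutatorElement_of (x y : V) :
    ⁅(of x : BaerGroup β), of y⁆ = (of (β x y) : BaerGroup β) := by
  simp only [commutatorElement_def, ← of_neg, of_mul_of]
  congr 1
  simp only [map_add, map_neg, map_smul, LinearMap.add_apply, LinearMap.neg_apply,
    LinearMap.smul_apply, β.bracket_bracket, β.self_eq_zero, ← β.neg_apply y x,
    neg_zero, neg_neg, smul_zero, add_zero, zero_add, neg_add_cancel]
  linear_combination (norm := module) invOf_two_add_invOf_two (R := R) • -β y x

theorem commutator_le {K : Subgroup (BaerGroup β)}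
    (hK : ∀ x y, (of (β x y) : BaerGroup β) ∈ K) : commutator (BaerGroup β) ≤ K := by
  rw [commutator_def, Subgroup.commutator_le]
  refine of.surjective.forall.2 fun x _ => of.surjective.forall.2 fun y _ => ?_
  rw [commutatorElement_of]
  exact hK x y

theorem of_mem_center {x : V} (hx : ∀ y, β x y = 0) :
    (of x : BaerGroup β) ∈ Subgroup.center (BaerGroup β) := by
  refine Subgroup.mem_center_iff.mpr fun y => ?_
  rw [← of.apply_symm_apply y, of_mul_of, of_mul_of, hx, ← β.neg_apply, hx, neg_zero,
    add_comm x]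

def map {γ : TwoStepBracket R W} (φ : V →ₗ[R] W)
    (hφ : ∀ x y, φ (β x y) = γ (φ x) (φ y)) : BaerGroup β →* BaerGroup γ where
  toFun x := of (φ (of.symm x))
  map_one' := by simp [← of_zero]
  map_mul' x y := by
    rw [← of.apply_symm_apply x, ← of.apply_symm_apply y, of_mul_of, of_mul_of]
    simp [hφ]

theorem map_injective {γ : TwoStepBracket R W} {φ : V →ₗ[R] W}
    (hφ : ∀ x y, φ (β x y) = γ (φ x) (φ y)) (hinj : Injective φ) :
    Injective (map φ hφ) :=
  of.injective.comp (hinj.comp of.symm.injective)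

end BaerGroup

class IsTwoStepOfExponent (p : ℕ) (G : Type*) [Group G] : Prop where
  pow_eq_one (g : G) : g ^ p = 1
  commutatorElement_mem_center (x y : G) : ⁅x, y⁆ ∈ Subgroup.center G

theorem MemKClass.isTwoStepOfExponent {p n : ℕ} {G : Type*} [Group G] {c : Fin n → G}
    (h : MemKClass p n G c) : IsTwoStepOfExponent p G where
  pow_eq_one := h.1
  commutatorElement_mem_center x y := h.2.2.1 <| h.2.1 <|
    Subgroup.commutator_mem_commutator (Subgroup.mem_top x) (Subgroup.mem_top y)

-- The exponent `p` is part of the type because Baer's sum below depends on it.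
def BaerLie (_p : ℕ) (G : Type*) : Type _ := G

namespace BaerLie

variable {p : ℕ} {G H : Type*} [Group G] [Group H]

def of : G ≃ BaerLie p G := Equiv.refl G

-- `x + y = x y [y, x]^{1/2}`, where `(p + 1) / 2` inverts `2` modulo the exponent `p`.
instance : Add (BaerLie p G) :=
  ⟨fun x y => of (of.symm x * of.symm y * ⁅of.symm y, of.symm x⁆ ^ ((p + 1) / 2))⟩

instance : Zero (BaerLie p G) := ⟨of 1⟩

instance : Neg (BaerLie p G) := ⟨fun x => of (of.symm x)⁻¹⟩

theorem of_add_of (x y : G) :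
    (of x + of y : BaerLie p G) = of (x * y * ⁅y, x⁆ ^ ((p + 1) / 2)) := rfl

theorem of_one : (of 1 : BaerLie p G) = 0 := rfl

theorem of_inv (x : G) : (of x⁻¹ : BaerLie p G) = -of x := rfl

theorem of_mul_of_commute {x y : G} (hxy : Commute x y) :
    (of (x * y) : BaerLie p G) = of x + of y := by
  rw [of_add_of, commutatorElement_eq_one_iff_commute.mpr hxy.symm, one_pow, mul_one]

variable [IsTwoStepOfExponent p G] [IsTwoStepOfExponent p H]

theorem of_commutatorElement_add_left (x y z : G) :
    (of ⁅x * y * ⁅y, x⁆ ^ ((p + 1) / 2), z⁆ : BaerLie p G) =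
      of ⁅x, z⁆ + of ⁅y, z⁆ := by
  have hc := IsTwoStepOfExponent.commutatorElement_mem_center p (G := G)
  rw [commutatorElement_mul_left_of_mem_center hc, commutatorElement_mul_left_of_mem_center hc,
    commutatorElement_eq_one_of_mem_center_left (pow_mem (hc y x) _), mul_one,
    of_mul_of_commute (Subgroup.mem_center_iff.mp (hc y z) _)]

theorem of_commutatorElement_add_right (x y z : G) :
    (of ⁅x, y * z * ⁅z, y⁆ ^ ((p + 1) / 2)⁆ : BaerLie p G) =
      of ⁅x, y⁆ + of ⁅x, z⁆ := by
  have hc := IsTwoStepOfExponent.commutatorElement_mem_center p (G := G)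
  rw [commutatorElement_mul_right_of_mem_center hc, commutatorElement_mul_right_of_mem_center hc,
    commutatorElement_eq_one_of_mem_center_right (pow_mem (hc z y) _), mul_one,
    of_mul_of_commute (Subgroup.mem_center_iff.mp (hc x z) _)]

open IsTwoStepOfExponent in
instance [hp : Fact (Odd p)] : AddCommGroup (BaerLie p G) where
  add_assoc := of.surjective.forall₃.2 fun x y z => by
    have hc := commutatorElement_mem_center (p := p) (G := G)
    have hcm (u v : G) : ⁅u, v⁆ ^ ((p + 1) / 2) ∈ Subgroup.center G := pow_mem (hc u v) _
    simp only [of_add_of, commutatorElement_mul_left_of_mem_center hc,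
      commutatorElement_mul_right_of_mem_center hc, commutatorElement_eq_one_of_mem_center_left
        (hcm _ _), commutatorElement_eq_one_of_mem_center_right (hcm _ _), mul_one,
      Commute.mul_pow (Subgroup.mem_center_iff.mp (hc z y) ⁅z, x⁆),
      Commute.mul_pow (Subgroup.mem_center_iff.mp (hc z x) ⁅y, x⁆)]
    simp only [mul_assoc]
    rw [← mul_assoc (⁅y, x⁆ ^ ((p + 1) / 2)) z, ← Subgroup.mem_center_iff.mp (hcm y x) z,
      mul_assoc z, ← Subgroup.mem_center_iff.mp (hcm z y), mul_assoc]
  zero_add := of.surjective.forall.2 fun x => by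
    rw [← of_one, of_add_of, commutatorElement_one_right, one_pow, one_mul, mul_one]
  add_zero := of.surjective.forall.2 fun x => by
    rw [← of_one, of_add_of, commutatorElement_one_left, one_pow, mul_one, mul_one]
  neg_add_cancel := of.surjective.forall.2 fun x => by
    rw [← of_inv, ← of_mul_of_commute (Commute.inv_left (Commute.refl x)), inv_mul_cancel,
      of_one]
  add_comm := of.surjective.forall₂.2 fun x y => by
    have hc := commutatorElement_mem_center (p := p) (G := G) y x
    have hsq : ⁅y, x⁆ ^ ((p + 1) / 2) * ⁅y, x⁆ ^ ((p + 1) / 2) = ⁅y, x⁆ := by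
      rw [← pow_add, ← two_mul, Nat.mul_div_cancel' hp.out.add_one.two_dvd, pow_succ,
        pow_eq_one, one_mul]
    have hyx : y * x = ⁅y, x⁆ * (x * y) := by group
    rw [of_add_of, of_add_of, hyx, ← Subgroup.mem_center_iff.mp hc, ← commutatorElement_inv y x,
      inv_pow, mul_assoc (x * y)]
    exact congrArg (fun t => of (x * y * t)) (eq_mul_inv_iff_mul_eq.mpr hsq)
  nsmul := nsmulRec
  zsmul := zsmulRec

variable [Fact (Odd p)]

theorem of_pow (x : G) (k : ℕ) : (of (x ^ k) : BaerLie p G) = k • of x := by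
  induction k with
  | zero => rw [pow_zero, zero_smul, of_one]
  | succ k ih => rw [pow_succ, of_mul_of_commute ((Commute.refl x).pow_left k), ih, succ_nsmul]

instance : Module (ZMod p) (BaerLie p G) :=
  AddCommGroup.zmodModule <| of.surjective.forall.2 fun x => by
    rw [← of_pow, IsTwoStepOfExponent.pow_eq_one, of_one]

theorem natCast_smul_of (k : ℕ) (x : G) : ((k : ZMod p) • of x : BaerLie p G) = of (x ^ k) := by
  rw [Nat.cast_smul_eq_nsmul, of_pow]

variable (p G) in
def bracketAddHom : BaerLie p G →+ BaerLie p G →+ BaerLie p G :=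
  AddMonoidHom.mk'
    (fun x => AddMonoidHom.mk' (fun y => of ⁅of.symm x, of.symm y⁆)
      (of.surjective.forall₂.2 fun _ _ => of_commutatorElement_add_right _ _ _))
    (of.surjective.forall₂.2 fun _ _ => AddMonoidHom.ext <| of.surjective.forall.2 fun _ =>
      of_commutatorElement_add_left _ _ _)

variable (p G) in
def bracket : TwoStepBracket (ZMod p) (BaerLie p G) where
  toBilin := ((AddMonoidHom.toZModLinearMapEquiv p).toAddMonoidHom.comp
    (bracketAddHom p G)).toZModLinearMap p
  isAlt := of.surjective.forall.2 fun x => congrArg of (commutatorElement_self x)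
  bracket_bracket' := of.surjective.forall₃.2 fun x y z => congrArg of
    (commutatorElement_eq_one_of_mem_center_left
      (IsTwoStepOfExponent.commutatorElement_mem_center p x y) z)

theorem bracket_of (x y : G) : bracket p G (of x) (of y) = of ⁅x, y⁆ := rfl

theorem of_mul (x y : G) :
    (of (x * y) : BaerLie p G) = of x + of y + (⅟2 : ZMod p) • bracket p G (of x) (of y) := by
  have hc := IsTwoStepOfExponent.commutatorElement_mem_center p x y
  rw [bracket_of, show (⅟2 : ZMod p) = (((p + 1) / 2 : ℕ) : ZMod p) from rfl, natCast_smul_of,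
    of_add_of, ← of_mul_of_commute (Subgroup.mem_center_iff.mp (pow_mem hc _) _), mul_assoc,
    ← commutatorElement_inv, inv_pow, inv_mul_cancel, mul_one]

variable (p G) in
def mulEquiv : G ≃* BaerGroup (bracket p G) where
  toEquiv := of.trans BaerGroup.of
  map_mul' x y := (congrArg BaerGroup.of (of_mul x y)).trans (BaerGroup.of_mul_of _ _).symm

variable (p) in
def _root_.MonoidHom.toBaerLie (φ : G →* H) : BaerLie p G →ₗ[ZMod p] BaerLie p H :=
  AddMonoidHom.toZModLinearMap p <|
    AddMonoidHom.mk' (fun x => of (φ (of.symm x))) <| of.surjective.forall₂.2 fun x y => by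
      simp only [of_add_of, Equiv.symm_apply_apply, map_mul, map_pow, map_commutatorElement]

theorem _root_.MonoidHom.toBaerLie_bracket (φ : G →* H) (x y : BaerLie p G) :
    φ.toBaerLie p (bracket p G x y) = bracket p H (φ.toBaerLie p x) (φ.toBaerLie p y) :=
  congrArg of (map_commutatorElement φ _ _)

theorem _root_.MonoidHom.toBaerLie_injective {φ : G →* H} (hφ : Injective φ) :
    Injective (φ.toBaerLie p) :=
  hφ

variable (p) in
theorem _root_.MonoidHom.exists_leftInverse_toBaerLie [Fact p.Prime] {φ : G →* H}
    (hφ : Injective φ) :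
    ∃ ψ : BaerLie p H →ₗ[ZMod p] BaerLie p G, LeftInverse ψ (φ.toBaerLie p) :=
  have ⟨ψ, hψ⟩ := (φ.toBaerLie p).exists_leftInverse_of_injective
    (LinearMap.ker_eq_bot.mpr (φ.toBaerLie_injective hφ))
  ⟨ψ, LinearMap.congr_fun hψ⟩

variable (p) in
def _root_.Subgroup.toBaerLie (K : Subgroup G) : Submodule (ZMod p) (BaerLie p G) :=
  AddSubgroup.toZModSubmodule p
    { carrier := of.symm ⁻¹' K
      add_mem' := fun {x y} hx hy => K.mul_mem (K.mul_mem hx hy) <| K.pow_mem (by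
        rw [commutatorElement_def]
        exact K.mul_mem (K.mul_mem (K.mul_mem hy hx) (K.inv_mem hy)) (K.inv_mem hx)) _
      zero_mem' := K.one_mem
      neg_mem' := K.inv_mem }

theorem _root_.Subgroup.mem_map_toBaerLie {K : Subgroup G} {φ : G →* H} {x : BaerLie p H} :
    x ∈ (K.toBaerLie p).map (φ.toBaerLie p) ↔ of.symm x ∈ K.map φ :=
  Iff.rfl

theorem isDerivedLeLeCenter {K : Subgroup G} (hK : commutator G ≤ K)
    (hKc : K ≤ Subgroup.center G) : (bracket p G).IsDerivedLeLeCenter (K.toBaerLie p) where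
  bracket_mem := of.surjective.forall₂.2 fun x y =>
    hK (Subgroup.commutator_mem_commutator (Subgroup.mem_top x) (Subgroup.mem_top y))
  bracket_eq_zero hx := of.surjective.forall.2 fun y =>
    congrArg of (commutatorElement_eq_one_of_mem_center_left (hKc hx) y)

theorem isDerivedLeLeCenter_map {K : Subgroup H} {φ : H →* G} (hK : commutator G ≤ K.map φ)
    (hKc : K.map φ ≤ Subgroup.center G) :
    (bracket p G).IsDerivedLeLeCenter ((K.toBaerLie p).map (φ.toBaerLie p)) where
  bracket_mem := (isDerivedLeLeCenter hK hKc).bracket_mem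
  bracket_eq_zero hx := (isDerivedLeLeCenter hK hKc).bracket_eq_zero hx

end BaerLie

section Amalgam

variable {R VA VB VC : Type*} [CommRing R] [AddCommGroup VA] [Module R VA] [AddCommGroup VB]
  [Module R VB] [AddCommGroup VC] [Module R VC]
  (βA : TwoStepBracket R VA) (βB : TwoStepBracket R VB) (βC : TwoStepBracket R VC)
  (f : VB →ₗ[R] VA) (g : VB →ₗ[R] VC) (s : VA →ₗ[R] VB) (r : VC →ₗ[R] VB)

def amalgProjRight : VA × VC →ₗ[R] VC :=
  (g ∘ₗ s).coprod (LinearMap.id - g ∘ₗ r)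

def amalgInr : VC →ₗ[R] VA × VC :=
  (f ∘ₗ r).prod (LinearMap.id - g ∘ₗ r)

def amalgBilin : VA × VC →ₗ[R] VA × VC →ₗ[R] VA :=
  let fst := LinearMap.fst R VA VC
  βA.toBilin.compl₁₂ fst fst +
    ((βC.toBilin.compl₁₂ (amalgProjRight g s r) (amalgProjRight g s r)).compr₂ r -
      βB.toBilin.compl₁₂ (s ∘ₗ fst) (s ∘ₗ fst)).compr₂ f

theorem amalgBilin_apply (x y : VA × VC) :
    amalgBilin βA βB βC f g s r x y = βA x.1 y.1 +
      f (r (βC (amalgProjRight g s r x) (amalgProjRight g s r y)) - βB (s x.1) (s y.1)) :=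
  rfl

theorem amalgBilin_self (x : VA × VC) : amalgBilin βA βB βC f g s r x x = 0 := by
  simp [amalgBilin_apply, TwoStepBracket.self_eq_zero]

variable {βA βB βC f g s r}

theorem amalgProjRight_amalgInr (hs : LeftInverse s f) (hr : LeftInverse r g)
    (z : VC) : amalgProjRight g s r (amalgInr f g r z) = z := by
  simp [amalgProjRight, amalgInr, hs.eq, hr.eq]

theorem amalgInr_apply_eq_inl (hr : LeftInverse r g) (b : VB) :
    amalgInr f g r (g b) = LinearMap.inl R VA VC (f b) := by
  simp [amalgInr, hr.eq]

theorem amalgInr_injective (hf : Injective f) : Injective (amalgInr f g r) := by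
  intro z z' h
  have hr : r z = r z' := hf (congrArg Prod.fst h)
  have hq : z - g (r z) = z' - g (r z') := congrArg Prod.snd h
  rwa [hr, sub_left_inj] at hq

theorem amalgBilin_inl_inl (hg : ∀ x y, g (βB x y) = βC (g x) (g y))
    (hr : LeftInverse r g) (a b : VA) :
    amalgBilin βA βB βC f g s r (a, 0) (b, 0) = βA a b := by
  simp [amalgBilin_apply, amalgProjRight, ← hg, hr.eq]

theorem amalgBilin_amalgInr (hf : ∀ x y, f (βB x y) = βA (f x) (f y))
    (hs : LeftInverse s f) (hr : LeftInverse r g) (z z' : VC) :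
    amalgBilin βA βB βC f g s r (amalgInr f g r z) (amalgInr f g r z') =
      f (r (βC z z')) := by
  rw [amalgBilin_apply, amalgProjRight_amalgInr hs hr, amalgProjRight_amalgInr hs hr]
  simp [amalgInr, ← hf, hs.eq]

theorem amalgBilin_inl_left_eq_zero {P : Submodule R VB} (hA : βA.IsDerivedLeLeCenter (P.map f))
    (hB : βB.IsDerivedLeLeCenter P) (hC : βC.IsDerivedLeLeCenter (P.map g))
    (hs : LeftInverse s f) {a : VA} (ha : a ∈ P.map f) (y : VA × VC) :
    amalgBilin βA βB βC f g s r (a, 0) y = 0 := by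
  obtain ⟨b, hb, rfl⟩ := ha
  rw [amalgBilin_apply, hA.bracket_eq_zero ⟨b, hb, rfl⟩]
  simp [amalgProjRight, hs b, hB.bracket_eq_zero hb, hC.bracket_eq_zero ⟨b, hb, rfl⟩]

theorem amalgBilin_mem {P : Submodule R VB} (hA : βA.IsDerivedLeLeCenter (P.map f))
    (hB : βB.IsDerivedLeLeCenter P) (hC : βC.IsDerivedLeLeCenter (P.map g))
    (hr : LeftInverse r g) (x y : VA × VC) :
    amalgBilin βA βB βC f g s r x y ∈ P.map f := by
  obtain ⟨b, hb, hbC⟩ := hC.bracket_mem (amalgProjRight g s r x) (amalgProjRight g s r y)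
  rw [amalgBilin_apply, ← hbC, hr.eq]
  exact add_mem (hA.bracket_mem _ _) (Submodule.mem_map_of_mem (sub_mem hb (hB.bracket_mem _ _)))

def amalgBracket {P : Submodule R VB} (hA : βA.IsDerivedLeLeCenter (P.map f))
    (hB : βB.IsDerivedLeLeCenter P) (hC : βC.IsDerivedLeLeCenter (P.map g))
    (hs : LeftInverse s f) (hr : LeftInverse r g) : TwoStepBracket R (VA × VC) where
  toBilin := (amalgBilin βA βB βC f g s r).compr₂ (LinearMap.inl R VA VC)
  isAlt x := by simp [amalgBilin_self]
  bracket_bracket' x y z := by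
    simp [amalgBilin_inl_left_eq_zero hA hB hC hs (amalgBilin_mem hA hB hC hr x y)]

variable {P : Submodule R VB} (hA : βA.IsDerivedLeLeCenter (P.map f))
    (hB : βB.IsDerivedLeLeCenter P) (hC : βC.IsDerivedLeLeCenter (P.map g))
    (hs : LeftInverse s f) (hr : LeftInverse r g)

theorem amalgBracket_apply (x y : VA × VC) :
    amalgBracket hA hB hC hs hr x y = (amalgBilin βA βB βC f g s r x y, 0) := rfl

theorem amalgBracket_inl (hg : ∀ x y, g (βB x y) = βC (g x) (g y)) (a b : VA) :
    LinearMap.inl R VA VC (βA a b) =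
      amalgBracket hA hB hC hs hr (LinearMap.inl R VA VC a) (LinearMap.inl R VA VC b) := by
  simp only [amalgBracket_apply, LinearMap.inl_apply, amalgBilin_inl_inl hg hr]

theorem amalgInr_bracket (hf : ∀ x y, f (βB x y) = βA (f x) (f y)) (z z' : VC) :
    amalgInr f g r (βC z z') =
      amalgBracket hA hB hC hs hr (amalgInr f g r z) (amalgInr f g r z') := by
  obtain ⟨b, -, hb⟩ := hC.bracket_mem z z'
  rw [amalgBracket_apply, amalgBilin_amalgInr hf hs hr, ← hb, amalgInr_apply_eq_inl hr,
    hr.eq, LinearMap.inl_apply]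

end Amalgam

theorem exists_amalgam_of_isTwoStepOfExponent {p : ℕ} [Fact p.Prime] [Fact (Odd p)]
    {A B C : Type} [Group A] [Group B] [Group C] [Finite A] [Finite C]
    [IsTwoStepOfExponent p A] [IsTwoStepOfExponent p B] [IsTwoStepOfExponent p C]
    {f : B →* A} {g : B →* C} (hf : Injective f) (hg : Injective g) {P : Subgroup B}
    (hA : commutator A ≤ P.map f) (hAc : P.map f ≤ Subgroup.center A)
    (hB : commutator B ≤ P) (hBc : P ≤ Subgroup.center B)
    (hC : commutator C ≤ P.map g) (hCc : P.map g ≤ Subgroup.center C) :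
    ∃ (D : Type) (_ : Group D) (_ : Finite D) (f' : A →* D) (g' : C →* D),
      (∀ d : D, d ^ p = 1) ∧ commutator D ≤ (P.map f).map f' ∧
      (P.map f).map f' ≤ Subgroup.center D ∧
      Injective f' ∧ Injective g' ∧ f'.comp f = g'.comp g := by
  obtain ⟨s, hs⟩ := f.exists_leftInverse_toBaerLie p hf
  obtain ⟨r, hr⟩ := g.exists_leftInverse_toBaerLie p hg
  have hPA := BaerLie.isDerivedLeLeCenter_map (p := p) hA hAc
  have hPB := BaerLie.isDerivedLeLeCenter (p := p) hB hBc
  have hPC := BaerLie.isDerivedLeLeCenter_map (p := p) hC hCc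
  have hinl := amalgBracket_inl hPA hPB hPC hs hr g.toBaerLie_bracket
  have hinr := amalgInr_bracket hPA hPB hPC hs hr f.toBaerLie_bracket
  let β := amalgBracket hPA hPB hPC hs hr
  let f' := (BaerGroup.map _ hinl).comp (BaerLie.mulEquiv p A).toMonoidHom
  let g' := (BaerGroup.map _ hinr).comp (BaerLie.mulEquiv p C).toMonoidHom
  refine ⟨BaerGroup β, inferInstance, inferInstanceAs (Finite (A × C)), f', g',
    BaerGroup.pow_eq_one p, ?_, ?_,
    (BaerGroup.map_injective hinl LinearMap.inl_injective).comp (BaerLie.mulEquiv p A).injective,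
    (BaerGroup.map_injective hinr (amalgInr_injective (f.toBaerLie_injective hf))).comp
      (BaerLie.mulEquiv p C).injective, ?_⟩
  · apply BaerGroup.commutator_le
    intro x y
    have hxy := Subgroup.mem_map_toBaerLie.mp (amalgBilin_mem (s := s) hPA hPB hPC hr x y)
    exact Subgroup.mem_map_of_mem f' hxy
  · refine Subgroup.map_le_iff_le_comap.mpr fun a ha =>
      BaerGroup.of_mem_center (x := LinearMap.inl _ _ _ (BaerLie.of a)) fun y => ?_
    rw [amalgBracket_apply, LinearMap.inl_apply,
      amalgBilin_inl_left_eq_zero (r := r) hPA hPB hPC hs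
        ((Subgroup.mem_map_toBaerLie (x := BaerLie.of a)).mpr ha)]
    rfl
  · ext b
    exact congrArg (BaerGroup.of (β := β))
      (amalgInr_apply_eq_inl (f := f.toBaerLie p) hr (BaerLie.of b)).symm

theorem amalgamation_Kn_general (p n : ℕ) (hp : p.Prime) (hodd : Odd p)
    (A B C : Type) [Group A] [Group B] [Group C] [Finite A] [Finite C]
    (cA : Fin n → A) (cB : Fin n → B) (cC : Fin n → C)
    (hA : MemKClass p n A cA) (hB : MemKClass p n B cB) (hC : MemKClass p n C cC)
    (f : B →* A) (g : B →* C)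
    (hfinj : Function.Injective f) (hginj : Function.Injective g)
    (hfc : ∀ i, f (cB i) = cA i) (hgc : ∀ i, g (cB i) = cC i) :
    ∃ (D : Type) (_ : Group D) (_ : Finite D) (cD : Fin n → D)
      (f' : A →* D) (g' : C →* D),
      MemKClass p n D cD ∧
      Function.Injective f' ∧ Function.Injective g' ∧
      (∀ i, f' (cA i) = cD i) ∧ (∀ i, g' (cC i) = cD i) ∧
      (∀ b : B, f' (f b) = g' (g b)) := by
  have := Fact.mk hp
  have := Fact.mk hodd
  have := hA.isTwoStepOfExponent
  have := hB.isTwoStepOfExponent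
  have := hC.isTwoStepOfExponent
  obtain ⟨-, hcommA, hcentA, hcardA⟩ := hA
  obtain ⟨-, hcommB, hcentB, -⟩ := hB
  obtain ⟨-, hcommC, hcentC, -⟩ := hC
  have hfcA : ⇑f ∘ cB = cA := funext hfc
  have hgcC : ⇑g ∘ cB = cC := funext hgc
  rw [← hfcA, Subgroup.closure_range_comp] at hcommA hcentA hcardA
  rw [← hgcC, Subgroup.closure_range_comp] at hcommC hcentC
  obtain ⟨D, instD, finD, f', g', hexp, hcomm, hcent, hf', hg', hcomp⟩ :=
    exists_amalgam_of_isTwoStepOfExponent (p := p) hfinj hginj hcommA hcentA hcommB hcentB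
      hcommC hcentC
  have hPD : Subgroup.closure (Set.range (f' ∘ cA)) =
      ((Subgroup.closure (Set.range cB)).map f).map f' := by
    rw [← hfcA, Subgroup.closure_range_comp, Subgroup.closure_range_comp]
  rw [← hPD] at hcomm hcent
  refine ⟨D, instD, finD, f' ∘ cA, f', g', ⟨hexp, hcomm, hcent, ?_⟩, hf', hg', fun i => rfl,
    fun i => ?_, fun b => DFunLike.congr_fun hcomp b⟩
  · rw [hPD, Subgroup.card_map_of_injective hf', hcardA]
  · rw [← hgc, ← MonoidHom.comp_apply, ← hcomp, MonoidHom.comp_apply, hfc]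
    rfl

/-- The amalgamation property for the class `𝕂(n)` of finite exponent-`p` groups `G`
with `[G,G] ≤ ⟨c₁,…,cₙ⟩ ≤ Z(G)` and `c₁,…,cₙ` linearly independent. -/
theorem amalgamation_Kn (p n : ℕ) (hp : p.Prime) (hodd : Odd p)
    (A B C : Type) [Group A] [Group B] [Group C] [Finite A] [Finite B] [Finite C]
    (cA : Fin n → A) (cB : Fin n → B) (cC : Fin n → C)
    (hA : MemKClass p n A cA) (hB : MemKClass p n B cB) (hC : MemKClass p n C cC)
    (f : B →* A) (g : B →* C)
    (hfinj : Function.Injective f) (hginj : Function.Injective g)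
    (hfc : ∀ i, f (cB i) = cA i) (hgc : ∀ i, g (cB i) = cC i) :
    ∃ (D : Type) (_ : Group D) (_ : Finite D) (cD : Fin n → D)
      (f' : A →* D) (g' : C →* D),
      MemKClass p n D cD ∧
      Function.Injective f' ∧ Function.Injective g' ∧
      (∀ i, f' (cA i) = cD i) ∧ (∀ i, g' (cC i) = cD i) ∧
      (∀ b : B, f' (f b) = g' (g b)) :=
  amalgamation_Kn_general p n hp hodd A B C cA cB cC hA hB hC f g hfinj hginj hfc hgc
end

section
/- Let p be an odd prime and n a natural number. Let A and C be finite groups of exponent p with designated tuples c^A : Fin n → A and c^C : Fin n → C such that in each group the subgroup P generated by the tuple satisfies [G,G] ≤ P ≤ Z(G) and P has order p^n. Then there exist a finite group D of exponent p with a tuple c^D : Fin n → D satisfying the same conditions, and injective homomorphisms f' : A →* D and g' : C →* D with f'(c^A i) = c^D i = g'(c^C i) for all i. (The joint embedding property for the class K(n).) -/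
/-
`D` is the central product of `A` and `C` amalgamating `cA i` with `cC i`: the quotient of
`A × C` by the central subgroup `N` generated by the elements `(cA i, (cC i)⁻¹)`. Being generated
by `n` commuting elements of order dividing `p`, `N` has at most `p ^ n` elements, while the two
projections map it onto `⟨cA⟩` and `⟨cC⟩`, which have exactly `p ^ n` elements. So both projections
are injective on `N`, which is what makes `A` and `C` embed into `D`. The other conditions of
`𝕂(n)` pass to `D` because `D` is generated by the images of `A` and `C`, and `⟨c^D⟩` is the
injective image of `⟨cA⟩`.
-/

open Subgroup

namespace Subgroup

variable {G H : Type*} [Group G] [Group H]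

theorem card_closure_range_le_pow {ι : Type*} [Fintype ι] {p : ℕ} (hp : 0 < p) {c : ι → G}
    (hcomm : Pairwise fun i j => Commute (c i) (c j)) (hc : ∀ i, c i ^ p = 1) :
    Nat.card (closure (Set.range c)) ≤ p ^ Fintype.card ι := by
  have hcomm' : Pairwise fun i j => ∀ x y, x ∈ zpowers (c i) → y ∈ zpowers (c j) → Commute x y := by
    rintro i j hij _ _ ⟨k, rfl⟩ ⟨l, rfl⟩
    exact (hcomm hij).zpow_zpow k l
  have : ∀ i, Finite (zpowers (c i)) := fun i =>
    (isOfFinOrder_iff_pow_eq_one.2 ⟨p, hp, hc i⟩).finite_zpowers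
  have hrange : closure (Set.range c) = (noncommPiCoprod hcomm').range := by
    rw [noncommPiCoprod_range, ← Set.iUnion_singleton_eq_range, closure_iUnion]
    simp only [zpowers_eq_closure]
  calc Nat.card (closure (Set.range c))
      = Nat.card (Set.range (noncommPiCoprod hcomm')) := by rw [hrange]; rfl
    _ ≤ Nat.card (∀ i, zpowers (c i)) := Finite.card_range_le _
    _ = ∏ i, orderOf (c i) := by simp only [Nat.card_pi, Nat.card_zpowers]
    _ ≤ p ^ Fintype.card ι :=
      Finset.prod_le_pow_card _ _ _ fun i _ => orderOf_le_of_pow_eq_one hp (hc i)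

theorem injOn_of_card_le_card_map {K : Subgroup G} [Finite K] {f : G →* H}
    (h : Nat.card K ≤ Nat.card (K.map f)) : Set.InjOn f K := by
  have hmap : Nat.card (K.map f) = Nat.card K :=
    le_antisymm (Nat.le_of_dvd Nat.card_pos (card_map_dvd K f)) h
  refine Set.injOn_of_ncard_image_eq ?_ (Set.toFinite _)
  rw [← Nat.card_coe_set_eq, ← Nat.card_coe_set_eq, ← coe_map]
  exact hmap

theorem map_center_le_center {f : G →* H} (hf : Function.Surjective f) :
    (center G).map f ≤ center H := by
  rintro _ ⟨g, hg, rfl⟩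
  refine mem_center_iff.2 fun h => ?_
  obtain ⟨x, rfl⟩ := hf h
  rw [← map_mul, ← map_mul, mem_center_iff.1 hg x]

theorem normal_of_le_center {N : Subgroup G} (h : N ≤ center G) : N.Normal :=
  ⟨fun x hx g => by rwa [mem_center_iff.1 (h hx) g, mul_inv_cancel_right]⟩

end Subgroup

theorem MemKClass.mem_center {p n : ℕ} {G : Type*} [Group G] {c : Fin n → G}
    (h : MemKClass p n G c) (i : Fin n) : c i ∈ center G :=
  h.2.2.1 (subset_closure ⟨i, rfl⟩)

section Amalgam

variable {p n : ℕ} {A C : Type*} [Group A] [Group C] (cA : Fin n → A) (cC : Fin n → C)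

def amalgamatingSubgroup : Subgroup (A × C) :=
  closure (Set.range fun i => (cA i, (cC i)⁻¹))

variable {cA cC}

theorem amalgamatingSubgroup_le_center (hA : ∀ i, cA i ∈ center A) (hC : ∀ i, cC i ∈ center C) :
    amalgamatingSubgroup cA cC ≤ center (A × C) := by
  rw [amalgamatingSubgroup, closure_le, Subgroup.center_prod]
  rintro _ ⟨i, rfl⟩
  exact ⟨hA i, Subgroup.inv_mem _ (hC i)⟩

theorem map_fst_amalgamatingSubgroup :
    (amalgamatingSubgroup cA cC).map (MonoidHom.fst A C) = closure (Set.range cA) := by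
  rw [amalgamatingSubgroup, MonoidHom.map_closure, ← Set.range_comp]
  rfl

theorem map_snd_amalgamatingSubgroup :
    (amalgamatingSubgroup cA cC).map (MonoidHom.snd A C) = closure (Set.range cC) := by
  rw [amalgamatingSubgroup, MonoidHom.map_closure, ← Set.range_comp, ← closure_inv,
    Set.inv_range]
  simp only [Function.comp_apply, MonoidHom.coe_snd, inv_inv]

theorem card_amalgamatingSubgroup_le (hp : 0 < p) (hA : MemKClass p n A cA)
    (hC : MemKClass p n C cC) : Nat.card (amalgamatingSubgroup cA cC) ≤ p ^ n := by
  have hcentral := amalgamatingSubgroup_le_center hA.mem_center hC.mem_center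
  simpa [amalgamatingSubgroup] using card_closure_range_le_pow (c := fun i => (cA i, (cC i)⁻¹)) hp
    (fun i j _ => mem_center_iff.1 (hcentral (subset_closure ⟨j, rfl⟩)) _)
    (fun i => Prod.ext (hA.1 _) (hC.1 _))

theorem injOn_fst_amalgamatingSubgroup [Finite A] [Finite C] (hp : 0 < p)
    (hA : MemKClass p n A cA) (hC : MemKClass p n C cC) :
    Set.InjOn (MonoidHom.fst A C) (amalgamatingSubgroup cA cC) :=
  injOn_of_card_le_card_map <| by
    rw [map_fst_amalgamatingSubgroup, hA.2.2.2]
    exact card_amalgamatingSubgroup_le hp hA hC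

theorem injOn_snd_amalgamatingSubgroup [Finite A] [Finite C] (hp : 0 < p)
    (hA : MemKClass p n A cA) (hC : MemKClass p n C cC) :
    Set.InjOn (MonoidHom.snd A C) (amalgamatingSubgroup cA cC) :=
  injOn_of_card_le_card_map <| by
    rw [map_snd_amalgamatingSubgroup, hC.2.2.2]
    exact card_amalgamatingSubgroup_le hp hA hC

variable (cA cC) [(amalgamatingSubgroup cA cC).Normal]

def amalgamInl : A →* (A × C) ⧸ amalgamatingSubgroup cA cC :=
  (QuotientGroup.mk' _).comp (MonoidHom.inl A C)

def amalgamInr : C →* (A × C) ⧸ amalgamatingSubgroup cA cC :=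
  (QuotientGroup.mk' _).comp (MonoidHom.inr A C)

theorem amalgamInl_mul_amalgamInr (a : A) (c : C) :
    amalgamInl cA cC a * amalgamInr cA cC c = QuotientGroup.mk (a, c) := by
  simp [amalgamInl, amalgamInr, ← QuotientGroup.mk_mul]

theorem amalgamInl_apply_eq_amalgamInr (i : Fin n) :
    amalgamInl cA cC (cA i) = amalgamInr cA cC (cC i) := by
  have hgen : ((cA i, 1) : A × C)⁻¹ * (1, cC i) = (cA i, (cC i)⁻¹)⁻¹ := by simp
  exact QuotientGroup.eq.2 (hgen ▸ inv_mem (subset_closure ⟨i, rfl⟩))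

variable {cA cC}

theorem injective_amalgamInl (h : Set.InjOn (MonoidHom.snd A C) (amalgamatingSubgroup cA cC)) :
    Function.Injective (amalgamInl cA cC) := by
  refine (injective_iff_map_eq_one _).2 fun a ha => ?_
  have hmem : ((a, 1) : A × C) ∈ amalgamatingSubgroup cA cC := (QuotientGroup.eq_one_iff _).1 ha
  exact congrArg Prod.fst (h hmem (one_mem _) rfl)

theorem injective_amalgamInr (h : Set.InjOn (MonoidHom.fst A C) (amalgamatingSubgroup cA cC)) :
    Function.Injective (amalgamInr cA cC) := by
  refine (injective_iff_map_eq_one _).2 fun c hc => ?_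
  have hmem : ((1, c) : A × C) ∈ amalgamatingSubgroup cA cC := (QuotientGroup.eq_one_iff _).1 hc
  exact congrArg Prod.snd (h hmem (one_mem _) rfl)

theorem closure_range_amalgamInl_eq_map_amalgamInl :
    closure (Set.range fun i => amalgamInl cA cC (cA i)) =
      (closure (Set.range cA)).map (amalgamInl cA cC) := by
  rw [MonoidHom.map_closure, ← Set.range_comp]
  rfl

theorem closure_range_amalgamInl_eq_map_amalgamInr :
    closure (Set.range fun i => amalgamInl cA cC (cA i)) =
      (closure (Set.range cC)).map (amalgamInr cA cC) := by
  simp_rw [amalgamInl_apply_eq_amalgamInr, MonoidHom.map_closure, ← Set.range_comp]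
  rfl

theorem commutator_le_closure_range_amalgamInl
    (hA : commutator A ≤ closure (Set.range cA)) (hC : commutator C ≤ closure (Set.range cC)) :
    commutator ((A × C) ⧸ amalgamatingSubgroup cA cC) ≤
      closure (Set.range fun i => amalgamInl cA cC (cA i)) := by
  have hprod : commutator (A × C) ≤ (closure (Set.range cA)).prod (closure (Set.range cC)) := by
    rw [commutator_def, ← top_prod_top, commutator_prod_prod]
    exact prod_mono hA hC
  rw [commutator_def, ← map_top_of_surjective _ (QuotientGroup.mk'_surjective _),
    ← map_commutator, ← commutator_def]
  refine (map_mono hprod).trans ?_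
  rintro _ ⟨⟨a, c⟩, ⟨ha, hc⟩, rfl⟩
  rw [QuotientGroup.mk'_apply, ← amalgamInl_mul_amalgamInr]
  refine mul_mem ?_ ?_
  · rw [closure_range_amalgamInl_eq_map_amalgamInl]
    exact mem_map_of_mem _ ha
  · rw [closure_range_amalgamInl_eq_map_amalgamInr]
    exact mem_map_of_mem _ hc

theorem memKClass_amalgam (hA : MemKClass p n A cA) (hC : MemKClass p n C cC)
    (hinj : Function.Injective (amalgamInl cA cC)) :
    MemKClass p n ((A × C) ⧸ amalgamatingSubgroup cA cC) fun i => amalgamInl cA cC (cA i) := by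
  obtain ⟨hexpA, hcommA, hcentA, hcardA⟩ := hA
  obtain ⟨hexpC, hcommC, -, -⟩ := hC
  refine ⟨?_, commutator_le_closure_range_amalgamInl hcommA hcommC, ?_, ?_⟩
  · refine fun d => QuotientGroup.induction_on d fun x => ?_
    rw [← QuotientGroup.mk_pow, show x ^ p = 1 from Prod.ext (hexpA x.1) (hexpC x.2),
      QuotientGroup.mk_one]
  · rw [closure_le]
    rintro _ ⟨i, rfl⟩
    refine map_center_le_center (QuotientGroup.mk'_surjective _) ⟨(cA i, 1), ?_, rfl⟩
    rw [Subgroup.center_prod]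
    exact ⟨hcentA (subset_closure ⟨i, rfl⟩), one_mem _⟩
  · rw [closure_range_amalgamInl_eq_map_amalgamInl, card_map_of_injective hinj, hcardA]

end Amalgam

theorem joint_embedding_Kn_general (p n : ℕ) (hp : p.Prime)
    (A C : Type) [Group A] [Group C] [Finite A] [Finite C]
    (cA : Fin n → A) (cC : Fin n → C)
    (hA : MemKClass p n A cA) (hC : MemKClass p n C cC) :
    ∃ (D : Type) (_ : Group D) (_ : Finite D) (cD : Fin n → D)
      (f' : A →* D) (g' : C →* D),
      MemKClass p n D cD ∧
      Function.Injective f' ∧ Function.Injective g' ∧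
      (∀ i, f' (cA i) = cD i) ∧ (∀ i, g' (cC i) = cD i) := by
  have : (amalgamatingSubgroup cA cC).Normal :=
    normal_of_le_center (amalgamatingSubgroup_le_center hA.mem_center hC.mem_center)
  have hinjA := injective_amalgamInl (injOn_snd_amalgamatingSubgroup hp.pos hA hC)
  have hinjC := injective_amalgamInr (injOn_fst_amalgamatingSubgroup hp.pos hA hC)
  exact ⟨_, inferInstance, inferInstance, _, _, _, memKClass_amalgam hA hC hinjA, hinjA, hinjC,
    fun _ => rfl, fun i => (amalgamInl_apply_eq_amalgamInr cA cC i).symm⟩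

/-- The joint embedding property for the class `𝕂(n)` of finite exponent-`p` groups
`G` with `[G,G] ≤ ⟨c₁,…,cₙ⟩ ≤ Z(G)` and `c₁,…,cₙ` linearly independent. -/
theorem joint_embedding_Kn (p n : ℕ) (hp : p.Prime) (hodd : Odd p)
    (A C : Type) [Group A] [Group C] [Finite A] [Finite C]
    (cA : Fin n → A) (cC : Fin n → C)
    (hA : MemKClass p n A cA) (hC : MemKClass p n C cC) :
    ∃ (D : Type) (_ : Group D) (_ : Finite D) (cD : Fin n → D)
      (f' : A →* D) (g' : C →* D),
      MemKClass p n D cD ∧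
      Function.Injective f' ∧ Function.Injective g' ∧
      (∀ i, f' (cA i) = cD i) ∧ (∀ i, g' (cC i) = cD i) :=
  joint_embedding_Kn_general p n hp A C cA cC hA hC
end

section
/- Let p be a prime, n a natural number, and let G be a group of exponent p with a subgroup P such that [G,G] ≤ P ≤ Z(G) and P has cardinality p^n. Then for every a ∈ G there exists a finite subset E ⊆ G with |E| ≤ n such that G = ⟨{a} ∪ E⟩ · C_G(a), i.e., every g ∈ G can be written as g = h·k with h in the subgroup generated by {a} ∪ E and k in the centralizer C_G(a). (G is the central product of ⟨a, E_a⟩ and C(a).) -/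
/-!
Since `[G,G] ≤ Z(G)`, the map `g ↦ [a,g]` is a homomorphism `G → P` whose kernel is `C_G(a)`.
Hence `C_G(a)` is a normal subgroup whose index `|[a,G]|` divides `|P| = p^n`. A subgroup whose
index divides `p^n` generates the whole group together with at most `n` further elements, since
adjoining an element outside the current subgroup divides the index by at least `p`. As `C_G(a)`
is normal, its join with the subgroup generated by these elements is their product.
-/

open scoped commutatorElement

namespace Subgroup

variable {G : Type*} [Group G]

theorem exists_finset_card_le_closure_sup_eq_top {p : ℕ} (hp : p.Prime) {n : ℕ}
    (H : Subgroup G) (hH : H.index ∣ p ^ n) :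
    ∃ S : Finset G, S.card ≤ n ∧ closure (S : Set G) ⊔ H = ⊤ := by
  induction n generalizing H with
  | zero =>
    rw [pow_zero, Nat.dvd_one, index_eq_one] at hH
    exact ⟨∅, le_rfl, by simp [hH]⟩
  | succ n ih =>
    classical
    by_cases hHtop : H = ⊤
    · exact ⟨∅, Nat.zero_le _, by simp [hHtop]⟩
    obtain ⟨x, -, hxH⟩ := SetLike.exists_of_lt (lt_top_iff_ne_top.mpr hHtop)
    set K := H ⊔ zpowers x
    have hKH : ¬K ≤ H := fun h => hxH (h (mem_sup_right (mem_zpowers x)))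
    have hrel_mul := relIndex_mul_index (le_sup_left : H ≤ K)
    have hp_dvd_rel : p ∣ H.relIndex K := by
      obtain ⟨m, -, hm⟩ := (Nat.dvd_prime_pow hp).mp ((Dvd.intro _ hrel_mul).trans hH)
      have hm0 : m ≠ 0 := by rintro rfl; exact hKH (relIndex_eq_one.mp (hm.trans (pow_zero p)))
      exact hm ▸ dvd_pow_self p hm0
    have hK : K.index ∣ p ^ n := by
      refine (Nat.mul_dvd_mul_iff_left hp.pos).mp ?_
      rw [← pow_succ']
      exact (mul_dvd_mul_right hp_dvd_rel _).trans (hrel_mul ▸ hH)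
    obtain ⟨S, hScard, hStop⟩ := ih K hK
    refine ⟨insert x S, (Finset.card_insert_le x S).trans (by omega), top_le_iff.mp ?_⟩
    rw [← hStop, Finset.coe_insert]
    have hx : x ∈ closure (insert x (S : Set G)) := subset_closure (Set.mem_insert x _)
    have hS : closure (S : Set G) ≤ closure (insert x (S : Set G)) :=
      closure_mono (Set.subset_insert x _)
    exact sup_le (le_sup_of_le_left hS)
      (sup_le le_sup_right (le_sup_of_le_left (zpowers_le.mpr hx)))

end Subgroup

section CommutatorHom

variable {G : Type*} [Group G]

def commutatorHom (a : G) (ha : ∀ g : G, ⁅a, g⁆ ∈ Subgroup.center G) : G →* G where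
  toFun g := ⁅a, g⁆
  map_one' := by simp
  map_mul' g h := by
    calc ⁅a, g * h⁆ = ⁅a, g⁆ * (g * ⁅a, h⁆ * g⁻¹) := by group
      _ = ⁅a, g⁆ * ⁅a, h⁆ := by rw [Subgroup.mem_center_iff.mp (ha h) g]; group

variable (a : G) (ha : ∀ g : G, ⁅a, g⁆ ∈ Subgroup.center G)

theorem ker_commutatorHom : (commutatorHom a ha).ker = Subgroup.centralizer {a} := by
  ext g
  rw [MonoidHom.mem_ker, Subgroup.mem_centralizer_singleton_iff]
  exact commutatorElement_eq_one_iff_mul_comm.trans eq_comm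

theorem range_commutatorHom_le : (commutatorHom a ha).range ≤ commutator G := by
  rintro _ ⟨g, rfl⟩
  exact Subgroup.commutator_mem_commutator (Subgroup.mem_top a) (Subgroup.mem_top g)

end CommutatorHom

theorem central_product_decomposition_general (p n : ℕ) (hp : p.Prime)
    (G : Type) [Group G]
    (P : Subgroup G) (hcomm : commutator G ≤ P) (hcent : P ≤ Subgroup.center G)
    (hPcard : Nat.card P = p ^ n) (a : G) :
    ∃ E : Finset G, E.card ≤ n ∧
      ∀ g : G, ∃ h k : G,
        h ∈ Subgroup.closure ({a} ∪ (E : Set G)) ∧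
        k ∈ Subgroup.centralizer {a} ∧
        g = h * k := by
  have ha : ∀ g : G, ⁅a, g⁆ ∈ Subgroup.center G := fun g =>
    hcent (hcomm (Subgroup.commutator_mem_commutator (Subgroup.mem_top a) (Subgroup.mem_top g)))
  set φ := commutatorHom a ha
  have hindex : φ.ker.index ∣ p ^ n := by
    rw [Subgroup.index_ker, ← hPcard]
    exact Subgroup.card_dvd_of_le ((range_commutatorHom_le a ha).trans hcomm)
  obtain ⟨E, hEcard, hEtop⟩ := Subgroup.exists_finset_card_le_closure_sup_eq_top hp φ.ker hindex
  refine ⟨E, hEcard, fun g => ?_⟩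
  obtain ⟨h, hh, k, hk, rfl⟩ :=
    Subgroup.mem_sup_of_normal_right.mp (hEtop ▸ Subgroup.mem_top g : g ∈ _ ⊔ φ.ker)
  exact ⟨h, k, Subgroup.closure_mono Set.subset_union_right hh,
    ker_commutatorHom a ha ▸ hk, rfl⟩

/-- In a group `G` of exponent `p` with `[G,G] ≤ P ≤ Z(G)` and `|P| = p^n`, every
element `a` admits a finite set `E` of at most `n` elements such that
`G = ⟨a, E⟩ · C_G(a)`: `G` is the central product of `⟨a, E_a⟩` and `C(a)`. -/
theorem central_product_decomposition (p n : ℕ) (hp : p.Prime)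
    (G : Type) [Group G] (hexp : ∀ g : G, g ^ p = 1)
    (P : Subgroup G) (hcomm : commutator G ≤ P) (hcent : P ≤ Subgroup.center G)
    (hPcard : Nat.card P = p ^ n) (a : G) :
    ∃ E : Finset G, E.card ≤ n ∧
      ∀ g : G, ∃ h k : G,
        h ∈ Subgroup.closure ({a} ∪ (E : Set G)) ∧
        k ∈ Subgroup.centralizer {a} ∧
        g = h * k :=
  central_product_decomposition_general p n hp G P hcomm hcent hPcard a
end

section
/- Let p be a prime and let G be a group of exponent p with a finite subgroup P such that [G,G] ≤ P ≤ Z(G). Suppose the quotient G/Z(G) is infinite. Then there exist sequences d, e : ℕ → G such that ⁅d i, e i⁆ ≠ 1 for every i, and ⁅d i, d j⁆ = 1, ⁅e i, e j⁆ = 1, and ⁅d i, e j⁆ = 1 for all i ≠ j. -/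
/-!
Since `[G,G] ≤ P` is finite and `h g h⁻¹ = ⁅h, g⁆ g`, every conjugacy class is finite, so the
centralizer of any finite set has finite index. Such a centralizer `C` cannot be abelian: otherwise
`C` and a finite set `R` of coset representatives of `C` generate `G`, and `C ⊓ C_G(R)` would be a
central subgroup of finite index, contradicting that `G/Z(G)` is infinite. So the centralizer of the
finitely many elements chosen so far always contains a noncommuting pair `d n, e n`.
-/

open scoped commutatorElement

open Subgroup MulAction

section

variable {G : Type*} [Group G]

section

variable [Finite (commutatorSet G)]

theorem finiteIndex_centralizer_singleton (g : G) : (centralizer {g}).FiniteIndex := by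
  have hconj : (orbit (ConjAct G) g).Finite :=
    (Set.toFinite (commutatorSet G)).image (· * g) |>.subset <| by
      rintro _ ⟨h, rfl⟩
      refine ⟨⁅ConjAct.ofConjAct h, g⁆, commutator_mem_commutatorSet _ _, ?_⟩
      simp only [ConjAct.smul_def, ← conj_eq_commutatorElement_mul, MulAut.conj_apply]
  have hindex : (centralizer {g}).index = (orbit (ConjAct G) g).ncard := by
    rw [← index_stabilizer, ConjAct.stabilizer_eq_centralizer]; rfl
  rw [finiteIndex_iff, hindex]
  exact (Set.ncard_pos hconj).mpr ⟨g, mem_orbit_self g⟩ |>.ne'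

theorem finiteIndex_centralizer_of_finite {s : Set G} (hs : s.Finite) :
    (centralizer s).FiniteIndex := by
  rw [centralizer_eq_iInf, ← hs.coe_toFinset]
  exact finiteIndex_iInf' _ fun g _ => finiteIndex_centralizer_singleton g

theorem finiteIndex_center_of_le_centralizer (K : Subgroup G) [K.FiniteIndex]
    (hK : K ≤ centralizer K) : (center G).FiniteIndex := by
  set R := Set.range fun q : G ⧸ K => q.out
  have hgen : closure (K ∪ R) = ⊤ := by
    refine eq_top_iff.2 fun g _ => ?_
    obtain ⟨k, hk⟩ := QuotientGroup.mk_out_eq_mul K g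
    rw [show g = (g : G ⧸ K).out * (k : G)⁻¹ by rw [hk]; group]
    exact mul_mem (subset_closure (Or.inr ⟨_, rfl⟩)) (inv_mem (subset_closure (Or.inl k.2)))
  have : (centralizer R).FiniteIndex :=
    finiteIndex_centralizer_of_finite (Set.finite_range _)
  refine finiteIndex_of_le (H := K ⊓ centralizer R) ?_
  rw [← centralizer_univ, ← coe_top, ← hgen, centralizer_closure]
  intro x hx
  obtain ⟨hxK, hxR⟩ := mem_inf.1 hx
  rw [mem_centralizer_iff] at hxR ⊢
  rintro y (hy | hy)
  exacts [hK hxK y hy, hxR y hy]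

theorem exists_not_commute_mem_centralizer (hZ : ¬(center G).FiniteIndex) {s : Set G}
    (hs : s.Finite) :
    ∃ x ∈ centralizer s, ∃ y ∈ centralizer s, ¬Commute x y := by
  by_contra! hcomm
  have := finiteIndex_centralizer_of_finite hs
  exact hZ <| finiteIndex_center_of_le_centralizer _ fun x hx y hy => (hcomm y hy x hx).eq

end

theorem exists_seq_commute_of_forall_finset
    (h : ∀ s : Finset G, ∃ x ∈ centralizer (s : Set G), ∃ y ∈ centralizer (s : Set G),
      ¬Commute x y) :
    ∃ d e : ℕ → G, (∀ i, ¬Commute (d i) (e i)) ∧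
      ∀ i j, i ≠ j → Commute (d i) (d j) ∧ Commute (e i) (e j) ∧ Commute (d i) (e j) := by
  classical
  choose x hx y hy hxy using h
  let S : ℕ → Finset G := fun n => Nat.rec ∅ (fun _ s => insert (x s) (insert (y s) s)) n
  have hS : Monotone S := monotone_nat_of_le_succ fun n =>
    (Finset.subset_insert _ _).trans (Finset.subset_insert _ _)
  have hxS : ∀ {i j}, i < j → x (S i) ∈ S j := fun hij =>
    hS (Nat.succ_le_of_lt hij) (Finset.mem_insert_self _ _)
  have hyS : ∀ {i j}, i < j → y (S i) ∈ S j := fun hij =>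
    hS (Nat.succ_le_of_lt hij) (Finset.mem_insert_of_mem (Finset.mem_insert_self _ _))
  have hlt : ∀ {i j}, i < j → Commute (x (S i)) (x (S j)) ∧ Commute (y (S i)) (y (S j)) ∧
      Commute (x (S i)) (y (S j)) ∧ Commute (y (S i)) (x (S j)) := fun hij =>
    ⟨hx _ _ (hxS hij), hy _ _ (hyS hij), hy _ _ (hxS hij), hx _ _ (hyS hij)⟩
  refine ⟨fun n => x (S n), fun n => y (S n), fun n => hxy (S n), fun i j hij => ?_⟩
  rcases hij.lt_or_gt with hij | hij
  · exact ⟨(hlt hij).1, (hlt hij).2.1, (hlt hij).2.2.1⟩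
  · exact ⟨(hlt hij).1.symm, (hlt hij).2.1.symm, (hlt hij).2.2.2.symm⟩

end

theorem exists_noncommuting_sequences_general
    (G : Type) [Group G]
    (P : Subgroup G) (hPfin : Finite P)
    (hcomm : commutator G ≤ P)
    (hinf : Infinite (G ⧸ Subgroup.center G)) :
    ∃ d e : ℕ → G,
      (∀ i : ℕ, ⁅d i, e i⁆ ≠ 1) ∧
      (∀ i j : ℕ, i ≠ j → ⁅d i, d j⁆ = 1 ∧ ⁅e i, e j⁆ = 1 ∧ ⁅d i, e j⁆ = 1) := by
  have : Finite (commutatorSet G) :=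
    (Set.toFinite (P : Set G)).subset fun _ hg =>
      hcomm (commutator_eq_closure G ▸ subset_closure hg)
  have hZ : ¬(center G).FiniteIndex := fun _ => not_finite (G ⧸ center G)
  obtain ⟨d, e, hde, hcommute⟩ := exists_seq_commute_of_forall_finset fun s =>
    exists_not_commute_mem_centralizer hZ s.finite_toSet
  simp only [ne_eq, commutatorElement_eq_one_iff_commute]
  exact ⟨d, e, hde, hcommute⟩

/-- In a group `G` of exponent `p` with a finite subgroup `P` satisfying
`[G,G] ≤ P ≤ Z(G)` and with `G/Z(G)` infinite, there are sequences `d, e : ℕ → G`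
with `⁅d i, e i⁆ ≠ 1` for all `i`, while all other pairs of chosen elements
commute. -/
theorem exists_noncommuting_sequences (p : ℕ) (hp : p.Prime)
    (G : Type) [Group G] (hexp : ∀ g : G, g ^ p = 1)
    (P : Subgroup G) (hPfin : Finite P)
    (hcomm : commutator G ≤ P) (hcent : P ≤ Subgroup.center G)
    (hinf : Infinite (G ⧸ Subgroup.center G)) :
    ∃ d e : ℕ → G,
      (∀ i : ℕ, ⁅d i, e i⁆ ≠ 1) ∧
      (∀ i j : ℕ, i ≠ j → ⁅d i, d j⁆ = 1 ∧ ⁅e i, e j⁆ = 1 ∧ ⁅d i, e j⁆ = 1) :=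
  exists_noncommuting_sequences_general G P hPfin hcomm hinf
end

section
/- Let p be a prime and let G be a group of exponent p with a finite subgroup P such that [G,G] ≤ P ≤ Z(G). Suppose the quotient G/Z(G) is infinite. Then there exist an element c ∈ G with c ≠ 1 and sequences d, e : ℕ → G such that ⁅d i, e i⁆ = c for every i, and ⁅d i, d j⁆ = 1, ⁅e i, e j⁆ = 1, and ⁅d i, e j⁆ = 1 for all i ≠ j. (Equivalently, Felgner's extraspecial group D(1) — the central product over ⟨c⟩ of infinitely many copies of the exponent-p Heisenberg group — embeds into G; Theorem 4.2(i).) -/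
open scoped commutatorElement

/-!
Since `[G,G]` is finite, the conjugacy class `{⁅g, x⁆ * x}` of every `x` is finite, so every
centralizer has finite index. If a finite-index subgroup `H` were abelian, `H` intersected with
the centralizers of a transversal of `H` would be a finite-index subgroup of `Z(G)`, contradicting
`|G : Z(G)| = ∞`. So the centralizer of any finitely many elements chosen so far contains a
non-commuting pair; choosing such pairs one after another gives pairs `(dₙ, eₙ)` commuting with
all earlier ones, and as the commutators `⁅dₙ, eₙ⁆` lie in the finite group `[G,G]`, some value
`c` is taken infinitely often.
-/

namespace Subgroup

variable {G : Type*} [Group G]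

theorem finiteIndex_centralizer_singleton_of_finite_commutator [Finite (_root_.commutator G)]
    (x : G) : (centralizer {x}).FiniteIndex := by
  have hconj : (MulAction.orbit (ConjAct G) x).Finite := by
    refine (Set.finite_range fun c : _root_.commutator G => (c : G) * x).subset ?_
    rintro _ ⟨g, rfl⟩
    exact ⟨⟨⁅ConjAct.ofConjAct g, x⁆, commutator_mem_commutator (mem_top _) (mem_top _)⟩, by
      simp [ConjAct.smul_def, commutatorElement_def]⟩
  have hindex := MulAction.index_stabilizer (ConjAct G) x
  rw [ConjAct.stabilizer_eq_centralizer] at hindex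
  constructor
  -- `ConjAct G` is `G`, so this is the same subgroup
  change (centralizer {ConjAct.toConjAct x}).index ≠ 0
  rw [hindex]
  exact ((Set.ncard_pos hconj).mpr ⟨x, MulAction.mem_orbit_self x⟩).ne'

theorem finiteIndex_centralizer_of_finite (hFC : ∀ x : G, (centralizer {x}).FiniteIndex)
    {s : Set G} (hs : s.Finite) : (centralizer s).FiniteIndex := by
  rw [centralizer_eq_iInf, ← hs.coe_toFinset]
  exact finiteIndex_iInf' _ fun x _ => hFC x

theorem exists_not_commute_of_finiteIndex (hFC : ∀ x : G, (centralizer {x}).FiniteIndex)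
    (hZ : Infinite (G ⧸ center G)) (H : Subgroup G) [H.FiniteIndex] :
    ∃ a ∈ H, ∃ b ∈ H, ¬Commute a b := by
  by_contra! hH
  have : Finite (G ⧸ H) := finite_quotient_of_finiteIndex
  let R := Set.range (Quotient.out : G ⧸ H → G)
  have hle : H ⊓ centralizer R ≤ center G := by
    rintro k ⟨hkH, hkR⟩
    refine mem_center_iff.mpr fun g => ?_
    obtain ⟨h, hh⟩ := QuotientGroup.mk_out_eq_mul H g
    have hout : Commute (Quotient.out (g : G ⧸ H)) k := mem_centralizer_iff.mp hkR _ ⟨_, rfl⟩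
    have hg : g = Quotient.out (g : G ⧸ H) * (h : G)⁻¹ := by rw [hh]; group
    rw [hg]
    exact (hout.mul_left (hH k hkH h h.2).symm.inv_left).eq
  have := finiteIndex_centralizer_of_finite hFC (Set.finite_range _) (s := R)
  have := finiteIndex_of_le hle
  exact not_finite (G ⧸ center G)

end Subgroup

section PairsCommute

open Subgroup

variable {G : Type*} [Group G]

def PairsCommute (a b : G × G) : Prop :=
  Commute a.1 b.1 ∧ Commute a.2 b.2 ∧ Commute a.1 b.2 ∧ Commute a.2 b.1

instance : Std.Symm (PairsCommute (G := G)) :=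
  ⟨fun _ _ ⟨h11, h22, h12, h21⟩ => ⟨h11.symm, h22.symm, h21.symm, h12.symm⟩⟩

theorem exists_seq_not_commute_pairwise_pairsCommute
    (hFC : ∀ x : G, (centralizer {x}).FiniteIndex) (hZ : Infinite (G ⧸ center G)) :
    ∃ f : ℕ → G × G,
      (∀ n, ¬Commute (f n).1 (f n).2) ∧ Pairwise fun m n => PairsCommute (f m) (f n) := by
  refine exists_seq_of_forall_finset_exists' (fun z : G × G => ¬Commute z.1 z.2) PairsCommute
    fun s _ => ?_
  let T : Set G := Prod.fst '' (s : Set (G × G)) ∪ Prod.snd '' (s : Set (G × G))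
  have hT : T.Finite := (s.finite_toSet.image _).union (s.finite_toSet.image _)
  have := finiteIndex_centralizer_of_finite hFC hT
  obtain ⟨a, ha, b, hb, hab⟩ := exists_not_commute_of_finiteIndex hFC hZ (centralizer T)
  refine ⟨(a, b), hab, fun z hz => ⟨?_, ?_, ?_, ?_⟩⟩
  · exact mem_centralizer_iff.mp ha _ (.inl ⟨z, hz, rfl⟩)
  · exact mem_centralizer_iff.mp hb _ (.inr ⟨z, hz, rfl⟩)
  · exact mem_centralizer_iff.mp hb _ (.inl ⟨z, hz, rfl⟩)
  · exact mem_centralizer_iff.mp ha _ (.inr ⟨z, hz, rfl⟩)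

end PairsCommute

theorem exists_strictMono_forall_eq_of_finite {α : Type*} [Finite α] (u : ℕ → α) :
    ∃ a, ∃ φ : ℕ → ℕ, StrictMono φ ∧ ∀ n, u (φ n) = a := by
  obtain ⟨a, ha⟩ := Finite.exists_infinite_fiber u
  obtain ⟨φ, hφ, hφa⟩ := Nat.exists_strictMono_subsequence fun N =>
    let ⟨n, hn, hNn⟩ := (Set.infinite_coe_iff.mp ha).exists_gt N
    ⟨n, hNn, hn⟩
  exact ⟨a, φ, hφ, hφa⟩

theorem exists_heisenberg_sequences_general
    (G : Type) [Group G]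
    (P : Subgroup G) (hPfin : Finite P)
    (hcomm : commutator G ≤ P)
    (hinf : Infinite (G ⧸ Subgroup.center G)) :
    ∃ (c : G) (d e : ℕ → G),
      c ≠ 1 ∧
      (∀ i : ℕ, ⁅d i, e i⁆ = c) ∧
      (∀ i j : ℕ, i ≠ j → ⁅d i, d j⁆ = 1 ∧ ⁅e i, e j⁆ = 1 ∧ ⁅d i, e j⁆ = 1) := by
  have : Finite (commutator G) := Finite.Set.subset (P : Set G) hcomm
  obtain ⟨f, hf, hpairs⟩ := exists_seq_not_commute_pairwise_pairsCommute
    Subgroup.finiteIndex_centralizer_singleton_of_finite_commutator hinf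
  obtain ⟨c, φ, hφ, hφc⟩ := exists_strictMono_forall_eq_of_finite fun n =>
    (⟨⁅(f n).1, (f n).2⁆,
      Subgroup.commutator_mem_commutator (Subgroup.mem_top _) (Subgroup.mem_top _)⟩ : commutator G)
  refine ⟨c, fun n => (f (φ n)).1, fun n => (f (φ n)).2, ?_, fun n => congrArg Subtype.val (hφc n),
    fun i j hij => ?_⟩
  · intro hc
    apply hf (φ 0)
    rw [← commutatorElement_eq_one_iff_commute, ← hc]
    exact congrArg Subtype.val (hφc 0)
  · obtain ⟨h11, h22, h12, -⟩ := hpairs (hφ.injective.ne hij)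
    simp only [commutatorElement_eq_one_iff_commute]
    exact ⟨h11, h22, h12⟩

/-- In a group `G` of exponent `p` with a finite subgroup `P` satisfying
`[G,G] ≤ P ≤ Z(G)` and with `G/Z(G)` infinite, there are a fixed `c ≠ 1` and
sequences `d, e : ℕ → G` with `⁅d i, e i⁆ = c` for all `i` while all other pairs
commute — i.e. Felgner's extraspecial group `D(1)` embeds into `G`
(Theorem 4.2(i)). -/
theorem exists_heisenberg_sequences (p : ℕ) (hp : p.Prime)
    (G : Type) [Group G] (hexp : ∀ g : G, g ^ p = 1)
    (P : Subgroup G) (hPfin : Finite P)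
    (hcomm : commutator G ≤ P) (hcent : P ≤ Subgroup.center G)
    (hinf : Infinite (G ⧸ Subgroup.center G)) :
    ∃ (c : G) (d e : ℕ → G),
      c ≠ 1 ∧
      (∀ i : ℕ, ⁅d i, e i⁆ = c) ∧
      (∀ i j : ℕ, i ≠ j → ⁅d i, d j⁆ = 1 ∧ ⁅e i, e j⁆ = 1 ∧ ⁅d i, e j⁆ = 1) :=
  exists_heisenberg_sequences_general G P hPfin hcomm hinf
end

section
/- Let G be a group with [G,G] ≤ Z(G) (nilpotent of class ≤ 2). Let c ∈ G with c ≠ 1, and let d, e : ℕ → G be sequences with ⁅d i, e i⁆ = c for all i and ⁅d i, e j⁆ = 1 for all i ≠ j. Then for every finite set T ⊆ ℕ and every i ∈ ℕ: ⁅∏_{j ∈ T} e j, d i⁆ = 1 if and only if i ∉ T. (This witnesses that the formula [y,x] = 1 has the independence property in such groups, and in particular in Th(D(1)).) -/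
/-!
In a group of nilpotency class at most two, `a ↦ ⁅a, x⁆` is a homomorphism into the centre,
so the commutator of `∏ j ∈ T, e j` with `d i` is the product of the `⁅e j, d i⁆ = ⁅d i, e j⁆⁻¹`.
All factors are trivial except the one with `j = i`, which is `c⁻¹ ≠ 1` and occurs exactly when
`i ∈ T`.
-/

open scoped commutatorElement IsMulCommutative

section CommutatorLeCenter

variable {G : Type*} [Group G] (hG : commutator G ≤ Subgroup.center G)
include hG

theorem commutatorElement_mem_center_of_commutator_le_center (a b : G) :
    ⁅a, b⁆ ∈ Subgroup.center G :=
  hG (Subgroup.commutator_mem_commutator (Subgroup.mem_top a) (Subgroup.mem_top b))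

theorem commutatorElement_mul_left_of_commutator_le_center (a b x : G) :
    ⁅a * b, x⁆ = ⁅a, x⁆ * ⁅b, x⁆ := by
  have hcomm := fun a b => Subgroup.mem_center_iff.mp
    (commutatorElement_mem_center_of_commutator_le_center hG a b)
  rw [commutatorElement_mul_left_eq_conj_mul, hcomm b x a, mul_inv_cancel_right, hcomm a x]

@[simps]
def commutatorLeftHom (x : G) : G →* Subgroup.center G where
  toFun a := ⟨⁅a, x⁆, commutatorElement_mem_center_of_commutator_le_center hG a x⟩
  map_one' := Subtype.ext (commutatorElement_one_left x)
  map_mul' a b := Subtype.ext (commutatorElement_mul_left_of_commutator_le_center hG a b x)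

theorem commutatorElement_sort_prod_left {ι : Type*} [LinearOrder ι] (T : Finset ι)
    (f : ι → G) (x : G) :
    ⁅((T.sort (· ≤ ·)).map f).prod, x⁆ = (↑(∏ j ∈ T, commutatorLeftHom hG x (f j)) : G) := by
  rw [← Finset.prod_map_toList, ← ((T.sort_perm_toList (· ≤ ·)).map _).prod_eq]
  refine congrArg Subtype.val ((map_list_prod (commutatorLeftHom hG x) _).trans ?_)
  rw [List.map_map]
  rfl

end CommutatorLeCenter

/-- Witness of the independence property of the formula `[y,x] = 1` in a group of
nilpotency class ≤ 2: if `⁅d i, e i⁆ = c ≠ 1` and `⁅d i, e j⁆ = 1` for `i ≠ j`,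
then for every finite `T ⊆ ℕ` and every `i`, the product of the `e j` for `j ∈ T`
(in increasing order) commutes with `d i` exactly when `i ∉ T`. -/
theorem independence_property_witness (G : Type) [Group G]
    (hnil : commutator G ≤ Subgroup.center G)
    (c : G) (hc : c ≠ 1) (d e : ℕ → G)
    (hde : ∀ i : ℕ, ⁅d i, e i⁆ = c)
    (hij : ∀ i j : ℕ, i ≠ j → ⁅d i, e j⁆ = 1) :
    ∀ (T : Finset ℕ) (i : ℕ),
      ⁅((T.sort (· ≤ ·)).map e).prod, d i⁆ = 1 ↔ i ∉ T := by
  intro T i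
  have hoff : ∀ j, j ≠ i → commutatorLeftHom hnil (d i) (e j) = 1 := fun j hji =>
    Subtype.ext <| by
      rw [commutatorLeftHom_apply_coe, ← commutatorElement_inv, hij i j hji.symm, inv_one]; rfl
  rw [commutatorElement_sort_prod_left hnil, OneMemClass.coe_eq_one]
  by_cases hi : i ∈ T
  · rw [Finset.prod_eq_single_of_mem i hi fun j _ => hoff j]
    simpa [hi, Subtype.ext_iff, ← commutatorElement_inv (d i), hde] using hc
  · simpa [hi] using Finset.prod_eq_one fun j hj => hoff j (ne_of_mem_of_not_mem hj hi)
end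

section
/- Let p be an odd prime. There exist a group G of exponent p with [G,G] ≤ Z(G), together with elements b : ℕ → G and arrays c, d : ℕ → ℕ → G, such that: (a) for every α and all i ≠ j, there is no x ∈ G with both ⁅x, b α⁆ = ⁅c α i, d α i⁆ and ⁅x, b α⁆ = ⁅c α j, d α j⁆; and (b) for every function f : ℕ → ℕ and every finite set s ⊆ ℕ there exists x ∈ G with ⁅x, b α⁆ = ⁅c α (f α), d α (f α)⁆ for all α ∈ s. (This is the combinatorial content of Proposition 2.1: the formula [x,y₁] = [y₂,y₃] has the tree property of the second kind in Th(D).) -/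
/-!
Work in the Heisenberg group of triples `(a, b, c)` over the ring `ℕ × ℕ → ZMod p`. Its
commutators `⁅g, h⁆ = (0, 0, g.a * h.b - h.a * g.b)` are central, and it has exponent `p` because
`p ∣ p.choose 2` for odd `p`. The node `(α, i)` of the tree is the central element
`(0, 0, e_(α,i))`. With `b α = (0, 1_α, 0)`, where `1_α` is the indicator of row `α`, the
commutator `⁅(a, 0, 0), b α⁆ = (0, 0, a * 1_α)` is the restriction of `a` to row `α`; taking for
`a` the indicator of the graph of `f` hits the node `(α, f α)` in every row at once.
-/

open scoped commutatorElement

@[ext]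
structure Heisenberg (R : Type) where
  a : R
  b : R
  c : R

namespace Heisenberg

variable {R : Type} [CommRing R]

-- `(a, b, c)` stands for the unitriangular matrix `[[1, a, c], [0, 1, b], [0, 0, 1]]`.
instance : Mul (Heisenberg R) := ⟨fun g h => ⟨g.a + h.a, g.b + h.b, g.c + h.c + g.a * h.b⟩⟩
instance : One (Heisenberg R) := ⟨⟨0, 0, 0⟩⟩
instance : Inv (Heisenberg R) := ⟨fun g => ⟨-g.a, -g.b, -g.c + g.a * g.b⟩⟩

@[simp] lemma mul_a (g h : Heisenberg R) : (g * h).a = g.a + h.a := rfl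
@[simp] lemma mul_b (g h : Heisenberg R) : (g * h).b = g.b + h.b := rfl
@[simp] lemma mul_c (g h : Heisenberg R) : (g * h).c = g.c + h.c + g.a * h.b := rfl
@[simp] lemma one_a : (1 : Heisenberg R).a = 0 := rfl
@[simp] lemma one_b : (1 : Heisenberg R).b = 0 := rfl
@[simp] lemma one_c : (1 : Heisenberg R).c = 0 := rfl
@[simp] lemma inv_a (g : Heisenberg R) : g⁻¹.a = -g.a := rfl
@[simp] lemma inv_b (g : Heisenberg R) : g⁻¹.b = -g.b := rfl
@[simp] lemma inv_c (g : Heisenberg R) : g⁻¹.c = -g.c + g.a * g.b := rfl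

instance : Group (Heisenberg R) where
  mul_assoc g h k := by ext <;> simp <;> ring
  one_mul g := by ext <;> simp
  mul_one g := by ext <;> simp
  inv_mul_cancel g := by ext <;> simp

lemma commutatorElement_eq (g h : Heisenberg R) : ⁅g, h⁆ = ⟨0, 0, g.a * h.b - h.a * g.b⟩ := by
  ext <;> simp [commutatorElement_def]
  ring

lemma commutator_le_center : commutator (Heisenberg R) ≤ Subgroup.center (Heisenberg R) := by
  rw [commutator_def, Subgroup.commutator_le]
  intro g _ h _
  rw [Subgroup.mem_center_iff]
  intro k
  ext <;> simp [commutatorElement_eq, add_comm]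

lemma pow_eq (g : Heisenberg R) (n : ℕ) :
    g ^ n = ⟨n * g.a, n * g.b, n * g.c + n.choose 2 * (g.a * g.b)⟩ := by
  induction n with
  | zero => ext <;> simp
  | succ n ih =>
    rw [pow_succ, ih]
    ext <;> simp [Nat.choose_succ_succ] <;> ring

lemma pow_eq_one_of_odd_of_natCast_eq_zero {n : ℕ} (hn : Odd n) (hR : (n : R) = 0)
    (g : Heisenberg R) : g ^ n = 1 := by
  have hchoose : n.choose 2 = n * ((n - 1) / 2) := by
    rw [Nat.choose_two_right, Nat.mul_div_assoc _ (Nat.Odd.sub_odd hn odd_one).two_dvd]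
  have hchoose_zero : (n.choose 2 : R) = 0 := by
    rw [hchoose, Nat.cast_mul, hR, zero_mul]
  ext <;> simp [pow_eq, hR, hchoose_zero]

end Heisenberg

section TreeWitnesses

variable {ι κ R : Type} [CommRing R] [DecidableEq ι] [DecidableEq κ]

def rowElement (α : ι) : Heisenberg (ι × κ → R) := ⟨0, fun q => if q.1 = α then 1 else 0, 0⟩

def pathElement (f : ι → κ) : Heisenberg (ι × κ → R) :=
  ⟨fun q => if q.2 = f q.1 then 1 else 0, 0, 0⟩

def cellLeft (q : ι × κ) : Heisenberg (ι × κ → R) := ⟨Pi.single q 1, 0, 0⟩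

def cellRight (q : ι × κ) : Heisenberg (ι × κ → R) := ⟨0, Pi.single q 1, 0⟩

lemma commutatorElement_cellLeft_cellRight (q : ι × κ) :
    ⁅cellLeft (R := R) q, cellRight q⁆ = (⟨0, 0, Pi.single q 1⟩ : Heisenberg (ι × κ → R)) := by
  rw [Heisenberg.commutatorElement_eq]
  ext <;> simp [cellLeft, cellRight, ← Pi.single_mul]

lemma commutatorElement_cellLeft_cellRight_injective [Nontrivial R] :
    Function.Injective fun q : ι × κ => ⁅cellLeft (R := R) q, cellRight (R := R) q⁆ := by
  intro q q' h
  simp only [commutatorElement_cellLeft_cellRight] at h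
  simpa [Pi.single_apply] using congrFun (congrArg Heisenberg.c h) q

lemma commutatorElement_pathElement_rowElement (f : ι → κ) (α : ι) :
    ⁅pathElement (R := R) f, rowElement α⁆ =
      (⟨0, 0, Pi.single (α, f α) 1⟩ : Heisenberg (ι × κ → R)) := by
  rw [Heisenberg.commutatorElement_eq]
  ext ⟨β, k⟩ <;> simp [pathElement, rowElement, Pi.single_apply]
  by_cases hβ : β = α <;> simp [hβ]

end TreeWitnesses

/-- The combinatorial content of Proposition 2.1: there is a 2-nilpotent group of
exponent `p` with witnesses `b`, `c`, `d` showing that the formula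
`[x,y₁] = [y₂,y₃]` has the tree property of the second kind: rows are
2-inconsistent, but every vertical path is (finitely) consistent. -/
theorem tree_property_second_kind (p : ℕ) (hp : p.Prime) (hodd : Odd p) :
    ∃ (G : Type) (_ : Group G) (b : ℕ → G) (c d : ℕ → ℕ → G),
      (∀ g : G, g ^ p = 1) ∧
      commutator G ≤ Subgroup.center G ∧
      (∀ α i j : ℕ, i ≠ j →
        ¬ ∃ x : G, ⁅x, b α⁆ = ⁅c α i, d α i⁆ ∧ ⁅x, b α⁆ = ⁅c α j, d α j⁆) ∧
      (∀ (f : ℕ → ℕ) (s : Finset ℕ),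
        ∃ x : G, ∀ α ∈ s, ⁅x, b α⁆ = ⁅c α (f α), d α (f α)⁆) := by
  have : Fact p.Prime := ⟨hp⟩
  refine ⟨Heisenberg (ℕ × ℕ → ZMod p), inferInstance, rowElement, fun α i => cellLeft (α, i),
    fun α i => cellRight (α, i),
    Heisenberg.pow_eq_one_of_odd_of_natCast_eq_zero hodd (by ext; simp),
    Heisenberg.commutator_le_center, ?_, fun f _ => ⟨pathElement f, fun α _ => ?_⟩⟩
  · rintro α i j hij ⟨x, hi, hj⟩
    exact hij (Prod.ext_iff.1 (commutatorElement_cellLeft_cellRight_injective (hi.symm.trans hj))).2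
  · rw [commutatorElement_pathElement_rowElement, commutatorElement_cellLeft_cellRight]
end

section
/- Let p be a prime, let V and W be vector spaces over 𝔽_p, and let β : V × V → W be an alternating bilinear map. Let V_B be a subspace of V and a : Fin m → V a tuple. Then there exist an 𝔽_p-vector space V', an injective linear map j : V → V', an alternating bilinear map β' : V' × V' → W with β'(j x, j y) = β(x, y) for all x, y ∈ V, and a tuple e : Fin m → V' whose images in V'/j(V) are linearly independent, such that β'(e i, j x) = β(a i, x) for all i and all x ∈ V_B. (The bilinear-map kernel of the Existence property of nonforking independence for Th(D(n)).) -/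
/-!
Adjoin to `V` free new vectors `e i`, i.e. pass to `V' = V × (Fin m →₀ 𝔽_p)`, and let each `e i`
pair with `V` exactly as `a i` does: with `f` the linear map sending `e i` to `a i`, set
`β'((v, u), (w, u')) = β(v, w) + β(f u, w) - β(f u', v)`. The correction term is skew, so `β'`
is alternating as soon as `β` is; the `e i` are independent modulo `V` because the second
projection kills `V`.
-/

namespace LinearMap

section SkewExtend

variable {R V U W : Type*} [CommSemiring R] [AddCommMonoid V] [Module R V]
  [AddCommMonoid U] [Module R U] [AddCommGroup W] [Module R W]
  (β : V →ₗ[R] V →ₗ[R] W) (f : U →ₗ[R] V)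

def skewExtend : V × U →ₗ[R] V × U →ₗ[R] W :=
  β.compl₁₂ (fst R V U) (fst R V U) + (β ∘ₗ f).compl₁₂ (snd R V U) (fst R V U)
    - ((β ∘ₗ f).compl₁₂ (snd R V U) (fst R V U)).flip

@[simp]
theorem skewExtend_apply (x y : V × U) :
    skewExtend β f x y = β x.1 y.1 + β (f x.2) y.1 - β (f y.2) x.1 := rfl

theorem skewExtend_self (halt : ∀ v, β v v = 0) (x : V × U) : skewExtend β f x x = 0 := by
  simp [halt]

theorem skewExtend_inl_inl (v w : V) : skewExtend β f (inl R V U v) (inl R V U w) = β v w := by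
  simp

theorem skewExtend_inr_inl (u : U) (w : V) :
    skewExtend β f (inr R V U u) (inl R V U w) = β (f u) w := by
  simp

end SkewExtend

theorem linearIndependent_mkQ_range_inl_inr {R V U ι : Type*} [Ring R]
    [AddCommGroup V] [Module R V] [AddCommGroup U] [Module R U] {u : ι → U}
    (hu : LinearIndependent R u) :
    LinearIndependent R fun i => (range (inl R V U)).mkQ (inr R V U (u i)) := by
  have hker : range (inl R V U) ≤ ker (snd R V U) := (range_inl R V U).le
  refine LinearIndependent.of_comp ((range (inl R V U)).liftQ (snd R V U) hker) ?_
  convert hu using 1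
  funext i
  simp

end LinearMap

theorem bilinear_existence_extension_general (p m : ℕ)
    (V W : Type) [AddCommGroup V] [Module (ZMod p) V]
    [AddCommGroup W] [Module (ZMod p) W]
    (β : V →ₗ[ZMod p] V →ₗ[ZMod p] W) (halt : ∀ x : V, β x x = 0)
    (V_B : Submodule (ZMod p) V) (a : Fin m → V) :
    ∃ (V' : Type) (_ : AddCommGroup V') (_ : Module (ZMod p) V')
      (j : V →ₗ[ZMod p] V') (β' : V' →ₗ[ZMod p] V' →ₗ[ZMod p] W) (e : Fin m → V'),
      Function.Injective j ∧
      (∀ x : V', β' x x = 0) ∧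
      (∀ x y : V, β' (j x) (j y) = β x y) ∧
      LinearIndependent (ZMod p) (fun i => (LinearMap.range j).mkQ (e i)) ∧
      (∀ (i : Fin m), ∀ x ∈ V_B, β' (e i) (j x) = β (a i) x) := by
  let U := Fin m →₀ ZMod p
  let f : U →ₗ[ZMod p] V := Finsupp.linearCombination (ZMod p) a
  refine ⟨V × U, inferInstance, inferInstance, LinearMap.inl (ZMod p) V U,
    LinearMap.skewExtend β f, fun i => LinearMap.inr (ZMod p) V U (Finsupp.single i 1),
    LinearMap.inl_injective, LinearMap.skewExtend_self β f halt, LinearMap.skewExtend_inl_inl β f,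
    LinearMap.linearIndependent_mkQ_range_inl_inr
      (Finsupp.linearIndependent_single_one (ZMod p) (Fin m)),
    fun i x _ => ?_⟩
  rw [LinearMap.skewExtend_inr_inl, Finsupp.linearCombination_single, one_smul]

/-- The bilinear-map kernel of the Existence property of nonforking independence
for `Th(D(n))`: given an alternating bilinear map `β` on `V`, a subspace `V_B` and
a tuple `a`, one can extend `V` by new vectors `e i`, linearly independent over
(the image of) `V`, so that some alternating bilinear extension `β'` of `β`
satisfies `β'(e i, x) = β(a i, x)` for all `x ∈ V_B`. -/
theorem bilinear_existence_extension (p m : ℕ) (hp : p.Prime)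
    (V W : Type) [AddCommGroup V] [Module (ZMod p) V]
    [AddCommGroup W] [Module (ZMod p) W]
    (β : V →ₗ[ZMod p] V →ₗ[ZMod p] W) (halt : ∀ x : V, β x x = 0)
    (V_B : Submodule (ZMod p) V) (a : Fin m → V) :
    ∃ (V' : Type) (_ : AddCommGroup V') (_ : Module (ZMod p) V')
      (j : V →ₗ[ZMod p] V') (β' : V' →ₗ[ZMod p] V' →ₗ[ZMod p] W) (e : Fin m → V'),
      Function.Injective j ∧
      (∀ x : V', β' x x = 0) ∧
      (∀ x y : V, β' (j x) (j y) = β x y) ∧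
      LinearIndependent (ZMod p) (fun i => (LinearMap.range j).mkQ (e i)) ∧
      (∀ (i : Fin m), ∀ x ∈ V_B, β' (e i) (j x) = β (a i) x) :=
  bilinear_existence_extension_general p m V W β halt V_B a
end

section
/- Let p be a prime, let V and W be vector spaces over 𝔽_p, and let β : V × V → W be an alternating bilinear map. Let V_M be a subspace of V, let b⁰, b¹ : Fin k → V be tuples such that the combined family (b⁰ 0, …, b⁰ (k-1), b¹ 0, …, b¹ (k-1)) is linearly independent over V_M, and let a⁰, a¹ : Fin m → V be tuples with β(a⁰ i, x) = β(a¹ i, x) for all i and all x ∈ V_M. Then there exist an 𝔽_p-vector space V', an injective linear map j : V → V', an alternating bilinear map β' : V' × V' → W with β'(j x, j y) = β(x, y) for all x, y ∈ V, and a tuple d : Fin m → V' whose images in V'/j(V) are linearly independent, such that for all i, l: β'(d i, j x) = β(a⁰ i, x) for every x ∈ V_M, β'(d i, j (b⁰ l)) = β(a⁰ i, b⁰ l), and β'(d i, j (b¹ l)) = β(a¹ i, b¹ l). (The bilinear-map kernel of the Independence-over-Models property of nonforking for Th(D(n)).) -/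
/-!
Adjoin to `V` free vectors `d i`, each pairing with `V` through a linear functional `g i : V → W`:
on `V × 𝔽_p^m` the form `((v, s), (v', t)) ↦ β v v' + ∑ sᵢ gᵢ(v') - ∑ tᵢ gᵢ(v)` is alternating and
extends `β`. Since `b⁰, b¹` are jointly independent over `V_M`, each `g i` can be chosen equal to
`β(a⁰ i, ·)` on `V_M` and on `b⁰`, and to `β(a¹ i, ·)` on `b¹`.
-/

open LinearMap

theorem LinearIndependent.exists_linearMap_apply_eq {K V W ι : Type*} [DivisionRing K]
    [AddCommGroup V] [Module K V] [AddCommGroup W] [Module K W]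
    {v : ι → V} (hv : LinearIndependent K v) (w : ι → W) :
    ∃ f : V →ₗ[K] W, ∀ i, f (v i) = w i := by
  obtain ⟨g, hg⟩ := (Finsupp.linearCombination K v).exists_leftInverse_of_injective
    (LinearMap.ker_eq_bot.2 hv)
  refine ⟨Finsupp.linearCombination K w ∘ₗ g, fun i => ?_⟩
  have hgv : g (v i) = Finsupp.single i 1 := by
    simpa using LinearMap.congr_fun hg (Finsupp.single i 1)
  simp [hgv]

theorem Submodule.exists_linearMap_eqOn_of_linearIndependent_mkQ {K V W ι : Type*} [DivisionRing K]
    [AddCommGroup V] [Module K V] [AddCommGroup W] [Module K W]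
    {p : Submodule K V} {v : ι → V} (hv : LinearIndependent K (p.mkQ ∘ v))
    (f : V →ₗ[K] W) (w : ι → W) :
    ∃ g : V →ₗ[K] W, Set.EqOn g f p ∧ ∀ i, g (v i) = w i := by
  obtain ⟨c, hc⟩ := hv.exists_linearMap_apply_eq (fun i => w i - f (v i))
  refine ⟨f + c ∘ₗ p.mkQ, fun x hx => ?_, fun i => ?_⟩
  · simp [(Submodule.Quotient.mk_eq_zero p).2 hx]
  · calc (f + c ∘ₗ p.mkQ) (v i) = f (v i) + (w i - f (v i)) := congrArg (f (v i) + ·) (hc i)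
      _ = w i := add_sub_cancel ..

section AltProdExtension

variable {R V U W : Type*} [CommSemiring R] [AddCommMonoid V] [Module R V]
  [AddCommMonoid U] [Module R U] [AddCommGroup W] [Module R W]
  (β : V →ₗ[R] V →ₗ[R] W) (φ : U →ₗ[R] V →ₗ[R] W)

def altProdExtension : V × U →ₗ[R] V × U →ₗ[R] W :=
  β.compl₁₂ (fst R V U) (fst R V U) + φ.compl₁₂ (snd R V U) (fst R V U)
    - (φ.compl₁₂ (snd R V U) (fst R V U)).flip

theorem altProdExtension_apply (x y : V × U) :
    altProdExtension β φ x y = β x.1 y.1 + φ x.2 y.1 - φ y.2 x.1 :=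
  rfl

theorem isAlt_altProdExtension (hβ : β.IsAlt) : (altProdExtension β φ).IsAlt := fun x => by
  simp [altProdExtension_apply, hβ x.1]

theorem altProdExtension_inl_inl (v v' : V) :
    altProdExtension β φ (inl R V U v) (inl R V U v') = β v v' := by
  simp [altProdExtension_apply]

theorem altProdExtension_inr_inl (u : U) (v : V) :
    altProdExtension β φ (inr R V U u) (inl R V U v) = φ u v := by
  simp [altProdExtension_apply]

end AltProdExtension

theorem LinearIndependent.mkQ_range_inl_inr {R V U ι : Type*} [Ring R]
    [AddCommGroup V] [Module R V] [AddCommGroup U] [Module R U]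
    {u : ι → U} (hu : LinearIndependent R u) :
    LinearIndependent R (fun i => (range (inl R V U)).mkQ (inr R V U (u i))) :=
  .of_comp ((range (inl R V U)).liftQ (snd R V U) (ker_snd R V U).ge)
    (by simpa [Function.comp_def] using hu)

theorem bilinear_independence_over_models_general (p m k : ℕ) (hp : p.Prime)
    (V W : Type) [AddCommGroup V] [Module (ZMod p) V]
    [AddCommGroup W] [Module (ZMod p) W]
    (β : V →ₗ[ZMod p] V →ₗ[ZMod p] W) (halt : ∀ x : V, β x x = 0)
    (V_M : Submodule (ZMod p) V)
    (b0 b1 : Fin k → V)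
    (hb : LinearIndependent (ZMod p) (fun i : Fin k ⊕ Fin k => V_M.mkQ (Sum.elim b0 b1 i)))
    (a0 a1 : Fin m → V) :
    ∃ (V' : Type) (_ : AddCommGroup V') (_ : Module (ZMod p) V')
      (j : V →ₗ[ZMod p] V') (β' : V' →ₗ[ZMod p] V' →ₗ[ZMod p] W) (d : Fin m → V'),
      Function.Injective j ∧
      (∀ x : V', β' x x = 0) ∧
      (∀ x y : V, β' (j x) (j y) = β x y) ∧
      LinearIndependent (ZMod p) (fun i => (LinearMap.range j).mkQ (d i)) ∧
      (∀ (i : Fin m), ∀ x ∈ V_M, β' (d i) (j x) = β (a0 i) x) ∧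
      (∀ (i : Fin m) (l : Fin k), β' (d i) (j (b0 l)) = β (a0 i) (b0 l)) ∧
      (∀ (i : Fin m) (l : Fin k), β' (d i) (j (b1 l)) = β (a1 i) (b1 l)) := by
  have : Fact p.Prime := ⟨hp⟩
  choose g hgM hgb using fun i => V_M.exists_linearMap_eqOn_of_linearIndependent_mkQ hb
    (β (a0 i)) (Sum.elim (fun l => β (a0 i) (b0 l)) (fun l => β (a1 i) (b1 l)))
  let φ := Fintype.linearCombination (ZMod p) g
  have hd : ∀ i x,
      altProdExtension β φ (inr (ZMod p) V _ (Pi.single i 1)) (inl _ _ _ x) = g i x :=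
    fun i x => by rw [altProdExtension_inr_inl, Fintype.linearCombination_apply_single, one_smul]
  refine ⟨V × (Fin m → ZMod p), inferInstance, inferInstance, inl _ _ _, altProdExtension β φ,
    fun i => inr (ZMod p) V _ (Pi.single i 1), inl_injective,
    isAlt_altProdExtension β φ halt, altProdExtension_inl_inl β φ,
    (Pi.linearIndependent_single_one (Fin m) (ZMod p)).mkQ_range_inl_inr,
    fun i x hx => ?_, fun i l => ?_, fun i l => ?_⟩
  · rw [hd]; exact hgM i hx
  · rw [hd]; exact hgb i (.inl l)
  · rw [hd]; exact hgb i (.inr l)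

/-- The bilinear-map kernel of the Independence-over-Models property of nonforking
for `Th(D(n))`: given tuples `b⁰`, `b¹` jointly linearly independent over `V_M` and
tuples `a⁰`, `a¹` with `β(a⁰ i, ·) = β(a¹ i, ·)` on `V_M`, one can extend `V` by
new vectors `d i`, linearly independent over the image of `V`, so that some
alternating bilinear extension `β'` of `β` agrees with `β(a⁰ i, ·)` on `V_M`, with
`β(a⁰ i, b⁰ l)` on `b⁰`, and with `β(a¹ i, b¹ l)` on `b¹`. -/
theorem bilinear_independence_over_models (p m k : ℕ) (hp : p.Prime)
    (V W : Type) [AddCommGroup V] [Module (ZMod p) V]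
    [AddCommGroup W] [Module (ZMod p) W]
    (β : V →ₗ[ZMod p] V →ₗ[ZMod p] W) (halt : ∀ x : V, β x x = 0)
    (V_M : Submodule (ZMod p) V)
    (b0 b1 : Fin k → V)
    (hb : LinearIndependent (ZMod p) (fun i : Fin k ⊕ Fin k => V_M.mkQ (Sum.elim b0 b1 i)))
    (a0 a1 : Fin m → V)
    (ha : ∀ (i : Fin m), ∀ x ∈ V_M, β (a0 i) x = β (a1 i) x) :
    ∃ (V' : Type) (_ : AddCommGroup V') (_ : Module (ZMod p) V')
      (j : V →ₗ[ZMod p] V') (β' : V' →ₗ[ZMod p] V' →ₗ[ZMod p] W) (d : Fin m → V'),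
      Function.Injective j ∧
      (∀ x : V', β' x x = 0) ∧
      (∀ x y : V, β' (j x) (j y) = β x y) ∧
      LinearIndependent (ZMod p) (fun i => (LinearMap.range j).mkQ (d i)) ∧
      (∀ (i : Fin m), ∀ x ∈ V_M, β' (d i) (j x) = β (a0 i) x) ∧
      (∀ (i : Fin m) (l : Fin k), β' (d i) (j (b0 l)) = β (a0 i) (b0 l)) ∧
      (∀ (i : Fin m) (l : Fin k), β' (d i) (j (b1 l)) = β (a1 i) (b1 l)) :=
  bilinear_independence_over_models_general p m k hp V W β halt V_M b0 b1 hb a0 a1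
end
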